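/- arXiv:2211.13485 — 14 statements merged into one kernel-verified Lean document; each statement's English description precedes it below -/
import Mathlib

section
/- Let l, k, n be natural numbers with gcd(k, n) = 1. Then gcd(e(l,k), 2^n - 1) = 2^{gcd(l,n)} - 1, where e(l,k) = ∑_{j=0}^{l-1} 2^{jk}. -/
lemma two_pow_sub_one_dvd {d m : ℕ} (h : d ∣ m) : 2 ^ d - 1 ∣ 2 ^ m - 1 := by
  obtain ⟨c, rfl⟩ := h
  simpa [pow_mul] using Nat.sub_dvd_pow_sub_pow (2 ^ d) 1 c

lemma two_pow_sub_one_mod (a b : ℕ) (ha : 0 < a) :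
    (2 ^ b - 1) % (2 ^ a - 1) = 2 ^ (b % a) - 1 := by
  conv_lhs => rw [← Nat.div_add_mod b a]
  have h1 : 2 ^ a - 1 ∣ 2 ^ (a * (b / a)) - 1 := two_pow_sub_one_dvd ⟨b / a, rfl⟩
  have key : 2 ^ (a * (b / a) + b % a) - 1
      = 2 ^ (b % a) - 1 + 2 ^ (b % a) * (2 ^ (a * (b / a)) - 1) := by
    have h2 : 1 ≤ 2 ^ (a * (b / a)) := Nat.one_le_two_pow
    have h3 : 1 ≤ (2 : ℕ) ^ (b % a) := Nat.one_le_two_pow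
    have h4 : (2 : ℕ) ^ (b % a) ≤ 2 ^ (b % a) * 2 ^ (a * (b / a)) :=
      Nat.le_mul_of_pos_right _ (by positivity)
    rw [pow_add, Nat.mul_sub, Nat.mul_one, mul_comm]
    omega
  obtain ⟨c, hc⟩ := h1
  rw [key, hc, mul_comm (2 ^ a - 1) c, ← mul_assoc, Nat.add_mul_mod_self_right]
  apply Nat.mod_eq_of_lt
  have h5 : (2 : ℕ) ^ (b % a) < 2 ^ a := Nat.pow_lt_pow_right one_lt_two (Nat.mod_lt _ ha)
  have h6 : (1 : ℕ) ≤ 2 ^ (b % a) := Nat.one_le_two_pow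
  omega

lemma gcd_two_pow_sub_one (a b : ℕ) :
    Nat.gcd (2 ^ a - 1) (2 ^ b - 1) = 2 ^ Nat.gcd a b - 1 := by
  induction a using Nat.strong_induction_on generalizing b with
  | _ a ih =>
    rcases Nat.eq_zero_or_pos a with rfl | ha
    · simp
    · rw [Nat.gcd_rec a b, ← ih (b % a) (Nat.mod_lt _ ha) a,
        ← two_pow_sub_one_mod a b ha, Nat.gcd_rec]

theorem stmt_1 (l k n : ℕ) (hkn : Nat.gcd k n = 1) :
    Nat.gcd (∑ j ∈ Finset.range l, 2 ^ (j * k)) (2 ^ n - 1) = 2 ^ Nat.gcd l n - 1 := by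
  have hmul : (2 ^ k - 1) * (∑ j ∈ Finset.range l, 2 ^ (j * k)) = 2 ^ (l * k) - 1 := by
    have hz : ((2 : ℤ) ^ k - 1) * (∑ j ∈ Finset.range l, (2 : ℤ) ^ (j * k))
        = 2 ^ (l * k) - 1 := by
      have := geom_sum_mul ((2 : ℤ) ^ k) l
      rw [mul_comm] at this
      simpa [← pow_mul, mul_comm k] using this
    have h1 : (1 : ℕ) ≤ 2 ^ k := Nat.one_le_two_pow
    have h2 : (1 : ℕ) ≤ 2 ^ (l * k) := Nat.one_le_two_pow
    zify [h1, h2]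
    exact hz
  set e := ∑ j ∈ Finset.range l, 2 ^ (j * k) with he
  set d := Nat.gcd l n with hd
  apply Nat.dvd_antisymm
  · have h1 : e ∣ 2 ^ (l * k) - 1 := ⟨2 ^ k - 1, by rw [← hmul]; ring⟩
    have h2 : Nat.gcd e (2 ^ n - 1) ∣ Nat.gcd (2 ^ (l * k) - 1) (2 ^ n - 1) :=
      Nat.dvd_gcd ((Nat.gcd_dvd_left _ _).trans h1) (Nat.gcd_dvd_right _ _)
    rw [gcd_two_pow_sub_one] at h2
    have : Nat.gcd (l * k) n = d := by
      rw [hd, Nat.Coprime.gcd_mul_right_cancel l hkn]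
    rwa [this] at h2
  · apply Nat.dvd_gcd
    · have hdvd : 2 ^ d - 1 ∣ (2 ^ k - 1) * e := by
        rw [hmul]
        exact two_pow_sub_one_dvd (Dvd.dvd.mul_right (Nat.gcd_dvd_left l n) k)
      have hdk : Nat.gcd d k = 1 := Nat.Coprime.coprime_dvd_left (Nat.gcd_dvd_right l n)
        (Nat.coprime_comm.mp hkn)
      have hcop : Nat.Coprime (2 ^ d - 1) (2 ^ k - 1) := by
        have := gcd_two_pow_sub_one d k
        simpa [Nat.Coprime, hdk] using this
      exact Nat.Coprime.dvd_of_dvd_mul_left hcop hdvd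
    · exact two_pow_sub_one_dvd (Nat.gcd_dvd_right l n)
end

section
/- Let l, k, n be natural numbers with gcd(k, n) = 1. The map x ↦ x^{e(l,k)} on the finite field F_{2^n} is a bijection if and only if gcd(l, n) = 1. -/
lemma aux_two_pow_sub_one_dvd {m n : ℕ} (h : m ∣ n) : 2 ^ m - 1 ∣ 2 ^ n - 1 := by
  obtain ⟨c, rfl⟩ := h
  simpa [pow_mul] using Nat.sub_dvd_pow_sub_pow (2 ^ m) 1 c

lemma aux_zmod_pow_eq_one {d a : ℕ} (hd : d ∣ 2 ^ a - 1) : (2 : ZMod d) ^ a = 1 := by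
  have h1 : (1 : ℕ) ≤ 2 ^ a := Nat.one_le_two_pow
  have h0 : ((2 ^ a - 1 : ℕ) : ZMod d) = 0 := (ZMod.natCast_eq_zero_iff _ _).mpr hd
  rw [Nat.cast_sub h1] at h0
  push_cast at h0
  rwa [sub_eq_zero] at h0

lemma aux_gcd_two_pow (m n : ℕ) :
    Nat.gcd (2 ^ m - 1) (2 ^ n - 1) = 2 ^ Nat.gcd m n - 1 := by
  rcases Nat.eq_zero_or_pos m with rfl | hm
  · simp
  rcases Nat.eq_zero_or_pos n with rfl | hn
  · simp
  apply Nat.dvd_antisymm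
  · set d := Nat.gcd (2 ^ m - 1) (2 ^ n - 1) with hd
    have hdm : d ∣ 2 ^ m - 1 := Nat.gcd_dvd_left _ _
    have hdn : d ∣ 2 ^ n - 1 := Nat.gcd_dvd_right _ _
    have hodd : ¬ 2 ∣ d := by
      intro h2
      have h2m : (2:ℕ) ∣ 2 ^ m := dvd_pow_self 2 hm.ne'
      have hone : (1:ℕ) ≤ 2 ^ m := Nat.one_le_two_pow
      have := h2.trans hdm
      omega
    have hcop : Nat.Coprime 2 d := (Nat.prime_two.coprime_iff_not_dvd).mpr hodd
    set u : (ZMod d)ˣ := ZMod.unitOfCoprime 2 hcop with hu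
    have hucoe : (u : ZMod d) = 2 := rfl
    have hum : u ^ m = 1 := by
      ext
      rw [Units.val_pow_eq_pow_val, hucoe, Units.val_one]
      exact aux_zmod_pow_eq_one hdm
    have hun : u ^ n = 1 := by
      ext
      rw [Units.val_pow_eq_pow_val, hucoe, Units.val_one]
      exact aux_zmod_pow_eq_one hdn
    have hog : orderOf u ∣ Nat.gcd m n :=
      Nat.dvd_gcd (orderOf_dvd_of_pow_eq_one hum) (orderOf_dvd_of_pow_eq_one hun)
    have hug : u ^ Nat.gcd m n = 1 := orderOf_dvd_iff_pow_eq_one.mp hog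
    have : (2 : ZMod d) ^ Nat.gcd m n = 1 := by
      rw [← hucoe, ← Units.val_pow_eq_pow_val, hug, Units.val_one]
    have h1 : (1 : ℕ) ≤ 2 ^ Nat.gcd m n := Nat.one_le_two_pow
    have : ((2 ^ Nat.gcd m n - 1 : ℕ) : ZMod d) = 0 := by
      rw [Nat.cast_sub h1]
      push_cast
      rwa [sub_eq_zero]
    exact (ZMod.natCast_eq_zero_iff _ _).mp this
  · exact Nat.dvd_gcd (aux_two_pow_sub_one_dvd (Nat.gcd_dvd_left m n))
      (aux_two_pow_sub_one_dvd (Nat.gcd_dvd_right m n))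

lemma aux_pow_bij_iff {F : Type*} [Field F] [Finite F] {e : ℕ} (he : 0 < e) :
    Function.Bijective (fun x : F => x ^ e) ↔ Nat.gcd e (Nat.card F - 1) = 1 := by
  constructor
  · intro hbij
    by_contra hne
    have hq1 : 1 < Nat.card F := Finite.one_lt_card
    set q := Nat.card F with hq
    set d := Nat.gcd e (q - 1) with hdd
    have hd1 : d ∣ q - 1 := Nat.gcd_dvd_right _ _
    have hde : d ∣ e := Nat.gcd_dvd_left _ _
    have hdpos : 0 < d := Nat.gcd_pos_of_pos_left _ he
    have hd2 : 2 ≤ d := by omega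
    obtain ⟨g, hog⟩ := IsCyclic.exists_ofOrder_eq_natCard (α := Fˣ)
    rw [Nat.card_units, ← hq] at hog
    have hyne : g ^ ((q - 1) / d) ≠ 1 := by
      intro h1
      have : orderOf g ∣ (q - 1) / d := orderOf_dvd_of_pow_eq_one h1
      rw [hog] at this
      have hlt : (q - 1) / d < q - 1 := Nat.div_lt_self (by omega) hd2
      have hpos : 0 < (q - 1) / d := Nat.div_pos (Nat.le_of_dvd (by omega) hd1) hdpos
      exact absurd (Nat.le_of_dvd hpos this) (by omega)
    have harith : (q - 1) / d * e = (q - 1) * (e / d) := by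
      obtain ⟨e', he'⟩ := hde
      obtain ⟨q', hq'⟩ := hd1
      rw [he', hq', Nat.mul_div_cancel_left _ hdpos, Nat.mul_div_cancel_left _ hdpos]
      ring
    have hye : (g ^ ((q - 1) / d)) ^ e = 1 := by
      rw [← pow_mul, harith, pow_mul, ← hog, pow_orderOf_eq_one, one_pow]
    have : ((g ^ ((q - 1) / d) : Fˣ) : F) = 1 := by
      have h := hbij.injective (a₁ := ((g ^ ((q - 1) / d) : Fˣ) : F)) (a₂ := (1 : F)) (by
        simp only [one_pow]
        rw [← Units.val_pow_eq_pow_val, hye, Units.val_one])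
      exact h
    exact hyne (Units.ext this)
  · intro hgcd
    have hcop : (Nat.card Fˣ).Coprime e := by
      rw [Nat.card_units]
      exact Nat.coprime_comm.mp hgcd
    have hinj : Function.Injective (fun x : F => x ^ e) := by
      intro x y hxy
      simp only at hxy
      rcases eq_or_ne y 0 with rfl | hy0
      · rw [zero_pow he.ne'] at hxy
        exact pow_eq_zero_iff he.ne' |>.mp hxy
      rcases eq_or_ne x 0 with rfl | hx0
      · rw [zero_pow he.ne'] at hxy
        exact ((pow_eq_zero_iff he.ne').mp hxy.symm).symm
      have := (powCoprime hcop).injective (a₁ := Units.mk0 x hx0) (a₂ := Units.mk0 y hy0) (by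
        ext
        simpa [powCoprime] using hxy)
      simpa using congrArg Units.val this
    exact ⟨hinj, Finite.surjective_of_injective hinj⟩

theorem stmt_2 (l k n : ℕ) (hn : 0 < n) (hl : 0 < l) (hkn : Nat.gcd k n = 1) :
    Function.Bijective (fun x : GaloisField 2 n => x ^ (∑ j ∈ Finset.range l, 2 ^ (j * k))) ↔
      Nat.gcd l n = 1 := by
  set e := ∑ j ∈ Finset.range l, 2 ^ (j * k) with he
  have hepos : 0 < e := by
    rw [he]
    exact Finset.sum_pos (fun i _ => Nat.pow_pos (by norm_num))
      (Finset.nonempty_range_iff.mpr hl.ne')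
  have hcard : Nat.card (GaloisField 2 n) = 2 ^ n := GaloisField.card 2 n hn.ne'
  rw [aux_pow_bij_iff hepos, hcard]
  -- key identity : e * (2^k - 1) = 2^(l*k) - 1
  have hkey : e * (2 ^ k - 1) = 2 ^ (l * k) - 1 := by
    have h1 : (1:ℕ) ≤ 2 ^ k := Nat.one_le_two_pow
    have h2 : (1:ℕ) ≤ 2 ^ (l * k) := Nat.one_le_two_pow
    zify [h1, h2, he]
    simp_rw [pow_mul']
    exact geom_sum_mul _ _
  have hck : Nat.Coprime (2 ^ k - 1) (2 ^ n - 1) := by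
    unfold Nat.Coprime
    rw [aux_gcd_two_pow, hkn, pow_one]
  have hchain : Nat.gcd e (2 ^ n - 1) = 2 ^ Nat.gcd l n - 1 := by
    rw [← Nat.Coprime.gcd_mul_right_cancel e hck, hkey, aux_gcd_two_pow,
      Nat.Coprime.gcd_mul_right_cancel l hkn]
  rw [hchain]
  have hgpos : 0 < Nat.gcd l n := Nat.gcd_pos_of_pos_right _ hn
  constructor
  · intro h
    have h3 : (1:ℕ) ≤ 2 ^ Nat.gcd l n := Nat.one_le_two_pow
    have h4 : 2 ^ Nat.gcd l n = 2 ^ 1 := by omega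
    exact Nat.pow_right_injective (le_refl 2) h4
  · intro h
    rw [h]
    norm_num
end

section
/- Let n, l, k be natural numbers with gcd(lk, n) = 1 and gcd(e(l-1,k), 2^n - 1) = 1, where e(m,k) = ∑_{j=0}^{m-1} 2^{jk}. Then the function F(x) = x^{e(l,k)} over F_{2^n} is 0-APN, i.e., the only solutions x ∈ F_{2^n} of x^{e(l,k)} + (x+1)^{e(l,k)} + 1 = 0 are x = 0 and x = 1. -/
open Finset

private lemma pow_two_pow_mul {F : Type*} [Monoid F] (x : F) (m : ℕ)
    (h : x ^ 2 ^ m = x) : ∀ c, x ^ 2 ^ (m * c) = x := by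
  intro c
  induction c with
  | zero => simp
  | succ c ih => rw [Nat.mul_succ, pow_add, pow_mul, ih, h]

private lemma descent {F : Type*} [Monoid F] (x : F) (m n : ℕ) (hn : 0 < n)
    (hg : Nat.gcd m n = 1) (hm : x ^ 2 ^ m = x) (hxn : x ^ 2 ^ n = x) :
    x ^ 2 = x := by
  rcases eq_or_lt_of_le (show 1 ≤ n from hn) with h1 | h1
  · rw [← h1] at hxn; simpa using hxn
  · obtain ⟨c, -, hc⟩ := Nat.exists_mul_mod_eq_one_of_coprime hg h1
    have hq : n * (m * c / n) + 1 = m * c := by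
      conv_rhs => rw [← Nat.div_add_mod (m * c) n]
      rw [hc]
    have h2 : x ^ 2 ^ (n * (m * c / n)) = x := pow_two_pow_mul x n hxn _
    have h3 : x ^ 2 ^ (m * c) = x := pow_two_pow_mul x m hm c
    calc x ^ 2 = (x ^ 2 ^ (n * (m * c / n))) ^ 2 := by rw [h2]
    _ = x ^ 2 ^ (n * (m * c / n) + 1) := by rw [← pow_mul, pow_succ]
    _ = x := by rw [hq, h3]

private lemma natA (l k : ℕ) :
    (∑ j ∈ range l, 2 ^ (j * k)) * 2 ^ k + 1
      = (∑ j ∈ range l, 2 ^ (j * k)) + 2 ^ (l * k) := by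
  induction l with
  | zero => simp
  | succ l ih =>
    rw [sum_range_succ, add_mul]
    have h : 2 ^ ((l + 1) * k) = 2 ^ (l * k) * 2 ^ k := by
      rw [← pow_add, Nat.succ_mul]
    rw [h]
    linarith [ih]

private lemma natB (m k : ℕ) :
    (∑ j ∈ range (m + 1), 2 ^ (j * k)) = 1 + 2 ^ k * ∑ j ∈ range m, 2 ^ (j * k) := by
  induction m with
  | zero => simp
  | succ m _ =>
    rw [Finset.sum_range_succ']
    simp only [Nat.zero_mul, pow_zero, Nat.add_mul, Nat.one_mul, pow_add]
    rw [← Finset.sum_mul]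
    ring

theorem stmt_3 (n l k : ℕ) (hn : 0 < n)
    (h1 : Nat.gcd (l * k) n = 1)
    (h2 : Nat.gcd (∑ j ∈ Finset.range (l - 1), 2 ^ (j * k)) (2 ^ n - 1) = 1) :
    ∀ x : GaloisField 2 n,
      x ^ (∑ j ∈ Finset.range l, 2 ^ (j * k)) +
        (x + 1) ^ (∑ j ∈ Finset.range l, 2 ^ (j * k)) + 1 = 0 →
      x = 0 ∨ x = 1 := by
  intro x hx
  by_contra hcon
  push_neg at hcon
  obtain ⟨hx0, hx1⟩ := hcon
  have h2z : (2 : GaloisField 2 n) = 0 := by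
    have := CharP.cast_eq_zero (GaloisField 2 n) 2
    exact_mod_cast this
  haveI : Fintype (GaloisField 2 n) := Fintype.ofFinite _
  have hcard : Fintype.card (GaloisField 2 n) = 2 ^ n := by
    rw [← Nat.card_eq_fintype_card]; exact GaloisField.card 2 n hn.ne'
  have hxn : x ^ 2 ^ n = x := by rw [← hcard]; exact FiniteField.pow_card x
  obtain ⟨m, rfl⟩ : ∃ m, l = m + 1 := by
    cases l with
    | zero =>
      exfalso
      simp only [Finset.range_zero, Finset.sum_empty, pow_zero] at hx
      have hone : (1 : GaloisField 2 n) = 0 := by linear_combination hx - h2z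
      exact one_ne_zero hone
    | succ m => exact ⟨m, rfl⟩
  set D := ∑ j ∈ Finset.range (m + 1), 2 ^ (j * k) with hDdef
  set E := ∑ j ∈ Finset.range m, 2 ^ (j * k) with hEdef
  have hD1 : D * 2 ^ k + 1 = D + 2 ^ ((m + 1) * k) := natA (m + 1) k
  have hD2 : D = 1 + 2 ^ k * E := natB m k
  have hE2 : (∑ j ∈ Finset.range (m + 1 - 1), 2 ^ (j * k)) = E := rfl
  rw [hE2] at h2
  have H2 : x ^ (D * 2 ^ k) + (x + 1) ^ (D * 2 ^ k) + 1 = 0 := by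
    have h0 : (x ^ D + (x + 1) ^ D + 1) ^ 2 ^ k = 0 := by
      rw [hx]; exact zero_pow (by positivity)
    rw [add_pow_char_pow, add_pow_char_pow, one_pow, ← pow_mul, ← pow_mul] at h0
    exact h0
  set w := x ^ 2 ^ ((m + 1) * k) with hwdef
  have e1 : x ^ (D * 2 ^ k) * x = x ^ D * w := by
    rw [← pow_succ, hD1, pow_add]
  have e3 : (x + 1) ^ 2 ^ ((m + 1) * k) = w + 1 := by
    rw [add_pow_char_pow, one_pow]
  have e2 : (x + 1) ^ (D * 2 ^ k) * (x + 1) = (x + 1) ^ D * (w + 1) := by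
    rw [← pow_succ, hD1, pow_add, e3]
  have key : (x ^ D + x) * (w + x) = 0 := by
    linear_combination (x * (x + 1)) * H2 - (x + 1) * e1 - x * e2 -
      (x * (w + 1)) * hx + (x * (x ^ D + w)) * h2z
  rcases mul_eq_zero.mp key with hA | hW
  · -- x ^ D = x
    have hxd : x ^ D = x := by linear_combination hA - x * h2z
    have hE1 : x ^ (2 ^ k * E) = 1 := by
      have hcalc : x * x ^ (2 ^ k * E) = x * 1 := by
        calc x * x ^ (2 ^ k * E) = x ^ (1 + 2 ^ k * E) := by rw [pow_add, pow_one]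
        _ = x ^ D := by rw [← hD2]
        _ = x := hxd
        _ = x * 1 := (mul_one x).symm
      exact mul_left_cancel₀ hx0 hcalc
    have hord1 : orderOf x ∣ 2 ^ k * E := orderOf_dvd_of_pow_eq_one hE1
    have hx2n : x ^ (2 ^ n - 1) = 1 := by
      have hc : x ^ (2 ^ n - 1) * x = 1 * x := by
        rw [one_mul, ← pow_succ]
        rw [Nat.sub_add_cancel (Nat.one_le_two_pow)]
        exact hxn
      exact mul_right_cancel₀ hx0 hc
    have hord2 : orderOf x ∣ 2 ^ n - 1 := orderOf_dvd_of_pow_eq_one hx2n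
    have hodd : ¬ 2 ∣ (2 ^ n - 1) := by
      have hd : 2 ∣ 2 ^ n := dvd_pow_self 2 hn.ne'
      have hp : 2 ≤ 2 ^ n := Nat.one_lt_two_pow_iff.mpr hn.ne'
      omega
    have hco : Nat.Coprime (orderOf x) (2 ^ k) := by
      apply Nat.Coprime.pow_right
      have hno : ¬ 2 ∣ orderOf x := fun h => hodd (h.trans hord2)
      have : orderOf x % 2 = 1 := by omega
      exact Nat.coprime_two_right.mpr (Nat.odd_iff.mpr this)
    have hordE : orderOf x ∣ E := hco.dvd_of_dvd_mul_left hord1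
    have hdvd1 : orderOf x ∣ 1 := by
      rw [← h2]; exact Nat.dvd_gcd hordE hord2
    exact hx1 (orderOf_eq_one_iff.mp (Nat.dvd_one.mp hdvd1))
  · -- w = x
    have hwx : x ^ 2 ^ ((m + 1) * k) = x := by linear_combination hW - x * h2z
    have hsq : x ^ 2 = x := descent x ((m + 1) * k) n hn h1 hwx hxn
    have hprod : x * (x + 1) = 0 := by linear_combination hsq + x * h2z
    rcases mul_eq_zero.mp hprod with h | h
    · exact hx0 h
    · exact hx1 (by linear_combination h - h2z)
end

section
/- Let n, M be natural numbers and a_1,...,a_M, b_1,...,b_M natural numbers such that the a_i are pairwise distinct modulo n and the b_i are pairwise distinct modulo n. If ∑_{i=1}^M 2^{a_i} ≡ ∑_{i=1}^M 2^{b_i} (mod 2^n - 1), then {a_i mod n : 1 ≤ i ≤ M} = {b_i mod n : 1 ≤ i ≤ M}. -/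
private lemma pow_mod_congr (n : ℕ) (hn : 1 ≤ n) (x : ℕ) :
    Nat.ModEq (2 ^ n - 1) (2 ^ x) (2 ^ (x % n)) := by
  conv_lhs => rw [← Nat.div_add_mod x n]
  rw [pow_add, pow_mul]
  have h1 : Nat.ModEq (2 ^ n - 1) (2 ^ n) 1 := by
    have h2 : (1:ℕ) ≤ 2 ^ n := Nat.one_le_two_pow
    exact ((Nat.modEq_iff_dvd' h2).2 dvd_rfl).symm
  calc (2 ^ n) ^ (x / n) * 2 ^ (x % n)
      ≡ 1 ^ (x / n) * 2 ^ (x % n) [MOD 2 ^ n - 1] :=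
        Nat.ModEq.mul (h1.pow _) (Nat.ModEq.refl _)
    _ = 2 ^ (x % n) := by ring

private lemma modeq_sum {ι : Type*} (m : ℕ) (s : Finset ι) (f g : ι → ℕ)
    (h : ∀ i ∈ s, Nat.ModEq m (f i) (g i)) :
    Nat.ModEq m (∑ i ∈ s, f i) (∑ i ∈ s, g i) := by
  classical
  induction s using Finset.induction with
  | empty => simp [Nat.ModEq.refl]
  | insert _ _ hx ih =>
    rw [Finset.sum_insert hx, Finset.sum_insert hx]
    exact Nat.ModEq.add (h _ (Finset.mem_insert_self _ _))
      (ih fun i hi => h i (Finset.mem_insert_of_mem hi))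

private lemma sum_range_two_pow (n : ℕ) : ∑ k ∈ Finset.range n, 2 ^ k = 2 ^ n - 1 := by
  induction n with
  | zero => simp
  | succ n ih =>
    rw [Finset.sum_range_succ, ih]
    have : (1:ℕ) ≤ 2 ^ n := Nat.one_le_two_pow
    have : 2 ^ (n + 1) = 2 * 2 ^ n := by ring
    omega

private lemma sum_bounds (n : ℕ) (A : Finset ℕ) (hA : A ⊆ Finset.range n)
    (hne : A.Nonempty) : 1 ≤ ∑ k ∈ A, 2 ^ k ∧ ∑ k ∈ A, 2 ^ k ≤ 2 ^ n - 1 := by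
  constructor
  · obtain ⟨x, hx⟩ := hne
    calc 1 ≤ 2 ^ x := Nat.one_le_two_pow
      _ ≤ _ := Finset.single_le_sum (fun i _ => Nat.zero_le _) hx
  · calc ∑ k ∈ A, 2 ^ k ≤ ∑ k ∈ Finset.range n, 2 ^ k :=
        Finset.sum_le_sum_of_subset hA
      _ = 2 ^ n - 1 := sum_range_two_pow n

theorem stmt_5 (n M : ℕ) (hn : 1 ≤ n) (hM : 1 ≤ M) (a b : Fin M → ℕ)
    (ha : ∀ i j : Fin M, a i % n = a j % n → i = j)
    (hb : ∀ i j : Fin M, b i % n = b j % n → i = j)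
    (hcong : Nat.ModEq (2 ^ n - 1) (∑ i, 2 ^ a i) (∑ i, 2 ^ b i)) :
    Finset.image (fun i => a i % n) Finset.univ =
      Finset.image (fun i => b i % n) Finset.univ := by
  set A := Finset.image (fun i => a i % n) Finset.univ with hAdef
  set B := Finset.image (fun i => b i % n) Finset.univ with hBdef
  have hsumA : ∑ k ∈ A, 2 ^ k = ∑ i, 2 ^ (a i % n) := by
    rw [hAdef, Finset.sum_image (fun i _ j _ h => ha i j h)]
  have hsumB : ∑ k ∈ B, 2 ^ k = ∑ i, 2 ^ (b i % n) := by
    rw [hBdef, Finset.sum_image (fun i _ j _ h => hb i j h)]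
  have hAsub : A ⊆ Finset.range n := by
    intro k hk
    simp only [hAdef, Finset.mem_image] at hk
    obtain ⟨i, _, rfl⟩ := hk
    exact Finset.mem_range.2 (Nat.mod_lt _ hn)
  have hBsub : B ⊆ Finset.range n := by
    intro k hk
    simp only [hBdef, Finset.mem_image] at hk
    obtain ⟨i, _, rfl⟩ := hk
    exact Finset.mem_range.2 (Nat.mod_lt _ hn)
  have hAne : A.Nonempty := ⟨a ⟨0, hM⟩ % n, Finset.mem_image.2 ⟨⟨0, hM⟩, Finset.mem_univ _, rfl⟩⟩
  have hBne : B.Nonempty := ⟨b ⟨0, hM⟩ % n, Finset.mem_image.2 ⟨⟨0, hM⟩, Finset.mem_univ _, rfl⟩⟩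
  have hcongA : Nat.ModEq (2 ^ n - 1) (∑ i, 2 ^ a i) (∑ k ∈ A, 2 ^ k) := by
    rw [hsumA]
    exact modeq_sum _ _ _ _ (fun i _ => pow_mod_congr n hn (a i))
  have hcongB : Nat.ModEq (2 ^ n - 1) (∑ i, 2 ^ b i) (∑ k ∈ B, 2 ^ k) := by
    rw [hsumB]
    exact modeq_sum _ _ _ _ (fun i _ => pow_mod_congr n hn (b i))
  have hAB : Nat.ModEq (2 ^ n - 1) (∑ k ∈ A, 2 ^ k) (∑ k ∈ B, 2 ^ k) :=
    (hcongA.symm.trans hcong).trans hcongB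
  obtain ⟨h1A, h2A⟩ := sum_bounds n A hAsub hAne
  obtain ⟨h1B, h2B⟩ := sum_bounds n B hBsub hBne
  have hm : 2 ≤ 2 ^ n := by
    calc 2 = 2 ^ 1 := rfl
      _ ≤ 2 ^ n := Nat.pow_le_pow_right (by norm_num) hn
  have heq : ∑ k ∈ A, 2 ^ k = ∑ k ∈ B, 2 ^ k := by
    rcases le_total (∑ k ∈ A, 2 ^ k) (∑ k ∈ B, 2 ^ k) with h | h
    · obtain ⟨c, hc⟩ := (Nat.modEq_iff_dvd' h).1 hAB
      rcases Nat.eq_zero_or_pos c with rfl | hc1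
      · omega
      · have := Nat.le_mul_of_pos_right (2 ^ n - 1) hc1
        omega
    · obtain ⟨c, hc⟩ := (Nat.modEq_iff_dvd' h).1 hAB.symm
      rcases Nat.eq_zero_or_pos c with rfl | hc1
      · omega
      · have := Nat.le_mul_of_pos_right (2 ^ n - 1) hc1
        omega
  exact Finset.geomSum_injective (le_refl 2) heq
end

section
/- Let l, k, m be natural numbers with n = 2m. Then 2^X · e(l, m-k) ≡ e(l, m+k) (mod 2^n - 1), where X = lk + lm + m - k. In particular, e(l, m-k) and e(l, m+k) lie in the same cyclotomic coset modulo 2^n - 1. -/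
lemma modeq_sum_aux {N : ℕ} {f g : ℕ → ℕ} (l : ℕ)
    (h : ∀ j < l, Nat.ModEq N (f j) (g j)) :
    Nat.ModEq N (∑ j ∈ Finset.range l, f j) (∑ j ∈ Finset.range l, g j) := by
  induction l with
  | zero => rfl
  | succ n ih =>
    rw [Finset.sum_range_succ, Finset.sum_range_succ]
    exact (ih fun j hj => h j (hj.trans (Nat.lt_succ_self n))).add
      (h n (Nat.lt_succ_self n))

theorem stmt_6 (l k m n : ℕ) (hk : 0 < k) (hkm : k < m) (hn : n = 2 * m) :
    Nat.ModEq (2 ^ n - 1)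
      (2 ^ (l * k + l * m + m - k) * ∑ j ∈ Finset.range l, 2 ^ (j * (m - k)))
      (∑ j ∈ Finset.range l, 2 ^ (j * (m + k))) := by
  subst hn
  have h1 : (1:ℕ) ≤ 2 ^ (2 * m) := Nat.one_le_two_pow
  have hpow : Nat.ModEq (2 ^ (2 * m) - 1) (2 ^ (2 * m)) 1 :=
    ((Nat.modEq_iff_dvd' h1).mpr dvd_rfl).symm
  rw [Finset.mul_sum]
  rw [← Finset.sum_range_reflect (fun j => 2 ^ (j * (m + k))) l]
  refine modeq_sum_aux l fun j hj => ?_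
  have hjl : j + 1 ≤ l := hj
  have hexp : l * k + l * m + m - k + j * (m - k)
      = (l - 1 - j) * (m + k) + (j + 1) * (2 * m) := by
    obtain ⟨s, rfl⟩ : ∃ s, m = k + s := ⟨m - k, by omega⟩
    obtain ⟨t, rfl⟩ : ∃ t, l = j + 1 + t := ⟨l - (j + 1), by omega⟩
    have e1 : k + s - k = s := by omega
    have e2 : j + 1 + t - 1 - j = t := by omega
    rw [Nat.add_sub_assoc (by omega : k ≤ k + s), e1, e2]
    ring
  calc 2 ^ (l * k + l * m + m - k) * 2 ^ (j * (m - k))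
      = 2 ^ ((l - 1 - j) * (m + k)) * (2 ^ (2 * m)) ^ (j + 1) := by
        rw [← pow_add, hexp, pow_add, mul_comm (j + 1) (2 * m), pow_mul 2 (2 * m) (j + 1)]
    _ ≡ 2 ^ ((l - 1 - j) * (m + k)) * 1 ^ (j + 1) [MOD 2 ^ (2 * m) - 1] :=
        (hpow.pow _).mul_left _
    _ = 2 ^ ((l - 1 - j) * (m + k)) := by simp
end

section
/- Let l, k, m be natural numbers with n = 2m + 1 and 0 < k ≤ m. Then 2^X · e(l, m-k+1) ≡ e(l, m+k) (mod 2^n - 1), where X = l(m+k) + m - k + 1. In particular, e(l, m-k+1) and e(l, m+k) lie in the same cyclotomic coset modulo 2^n - 1. -/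
theorem stmt_7 (l k m n : ℕ) (hk : 0 < k) (hkm : k ≤ m) (hn : n = 2 * m + 1) :
    Nat.ModEq (2 ^ n - 1)
      (2 ^ (l * (m + k) + m - k + 1) * ∑ j ∈ Finset.range l, 2 ^ (j * (m - k + 1)))
      (∑ j ∈ Finset.range l, 2 ^ (j * (m + k))) := by
  apply (ZMod.natCast_eq_natCast_iff _ _ _).mp
  push_cast
  have h2 : (2 : ZMod (2 ^ n - 1)) ^ n = 1 := by
    have : ((2 ^ n : ℕ) : ZMod (2 ^ n - 1)) = ((1 : ℕ) : ZMod (2 ^ n - 1)) := by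
      apply (ZMod.natCast_eq_natCast_iff _ _ _).mpr
      exact ((Nat.modEq_iff_dvd' (Nat.one_le_two_pow)).mpr dvd_rfl).symm
    push_cast at this
    exact this
  obtain ⟨d, rfl⟩ := Nat.exists_eq_add_of_le hkm
  rw [← Finset.sum_range_reflect (fun j => (2:ZMod (2^n-1)) ^ (j * (k + d + k)))]
  rw [Finset.mul_sum]
  apply Finset.sum_congr rfl
  intro j hj
  rw [Finset.mem_range] at hj
  obtain ⟨a, ha⟩ := Nat.exists_eq_add_of_lt hj
  have hl1 : l - 1 - j = a := by omega
  have h3 : k + d - k = d := by omega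
  have he : l * (k + d + k) + (k + d) - k + 1 + j * (k + d - k + 1)
      = a * (k + d + k) + (j + 1) * n := by
    subst ha hn
    rw [h3, Nat.add_sub_assoc (Nat.le_add_right k d), h3]
    ring
  rw [← pow_add, he, hl1, pow_add, Nat.mul_comm (j+1) n, pow_mul 2 n (j+1), h2, one_pow, mul_one]
end

section
/- Let n, t, m be natural numbers with gcd(n, 2t) = 2 and 0 < m < n/2. Then the binary Hamming weight of e(m, 2t) reduced modulo 2^n - 1 equals m. -/
/-- Sum of binary digits of a sum of distinct powers of two equals the number of powers. -/
lemma digitSum_sum_two_pow : ∀ T : ℕ, ∀ s : Finset ℕ, (∑ e ∈ s, 2 ^ e) = T →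
    (Nat.digits 2 T).sum = s.card := by
  intro T
  induction T using Nat.strong_induction_on with
  | _ T ih =>
    intro s hs
    rcases Nat.eq_zero_or_pos T with h0 | hpos
    · subst h0
      have hse : s = ∅ := by
        by_contra h
        obtain ⟨e, he⟩ := Finset.nonempty_iff_ne_empty.mpr h
        have : 0 < ∑ e ∈ s, 2 ^ e :=
          Finset.sum_pos' (fun _ _ => Nat.zero_le _) ⟨e, he, pow_pos (by norm_num) e⟩
        omega
      subst hse; simp
    · set s' : Finset ℕ := (s.erase 0).image (· - 1) with hs'
      have hinj : ∀ x ∈ s.erase 0, ∀ y ∈ s.erase 0, x - 1 = y - 1 → x = y := by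
        intro x hx y hy hxy
        have hx0 : x ≠ 0 := Finset.ne_of_mem_erase hx
        have hy0 : y ≠ 0 := Finset.ne_of_mem_erase hy
        omega
      have hsum' : ∑ e ∈ s', 2 ^ e = ∑ e ∈ s.erase 0, 2 ^ (e - 1) := Finset.sum_image hinj
      have hkey : ∑ e ∈ s.erase 0, 2 ^ e = 2 * ∑ e ∈ s', 2 ^ e := by
        rw [hsum', Finset.mul_sum]
        refine Finset.sum_congr rfl fun e he => ?_
        have he0 : e ≠ 0 := Finset.ne_of_mem_erase he
        have h1 : (2:ℕ) ^ (e-1) * 2 = 2 ^ ((e-1)+1) := (pow_succ 2 (e-1)).symm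
        rw [mul_comm, h1]
        congr 1
        omega
      have hT : T = (if 0 ∈ s then 1 else 0) + 2 * ∑ e ∈ s', 2 ^ e := by
        rw [← hs, ← hkey]
        by_cases h0 : 0 ∈ s
        · simp [h0, ← Finset.add_sum_erase s _ h0]
        · simp [h0, Finset.erase_eq_of_notMem h0]
      have hmod : T % 2 = if 0 ∈ s then 1 else 0 := by
        by_cases h0 : 0 ∈ s <;> simp [h0] at hT ⊢ <;> omega
      have hdiv : T / 2 = ∑ e ∈ s', 2 ^ e := by
        by_cases h0 : 0 ∈ s <;> simp [h0] at hT ⊢ <;> omega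
      rw [Nat.digits_def' (by norm_num : 1 < 2) hpos, List.sum_cons, hmod,
        ih (T / 2) (Nat.div_lt_self hpos one_lt_two) s' hdiv.symm]
      have hcard' : s'.card = (s.erase 0).card := Finset.card_image_of_injOn (fun x hx y hy => hinj x hx y hy)
      rw [hcard']
      by_cases h0 : 0 ∈ s
      · rw [Finset.card_erase_of_mem h0]
        simp [h0]
        have : 0 < s.card := Finset.card_pos.mpr ⟨0, h0⟩
        omega
      · rw [Finset.erase_eq_of_notMem h0]
        simp [h0]

theorem stmt_8 (n t m : ℕ) (hgcd : Nat.gcd n (2 * t) = 2) (hm : 0 < m) (hmn : 2 * m < n) :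
    (Nat.digits 2 ((∑ j ∈ Finset.range m, 2 ^ (j * (2 * t))) % (2 ^ n - 1))).sum = m := by
  have hn : 0 < n := by omega
  have ht : 0 < t := by
    rcases Nat.eq_zero_or_pos t with h | h
    · subst h; simp at hgcd; omega
    · exact h
  have hn2 : 2 ∣ n := hgcd ▸ Nat.gcd_dvd_left n (2 * t)
  set M := 2 ^ n - 1 with hM
  set f : ℕ → ℕ := fun j => (j * (2 * t)) % n with hf
  -- injectivity of f on range m
  have hinj : ∀ a ∈ Finset.range m, ∀ b ∈ Finset.range m, f a = f b → a = b := by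
    intro a ha b hb hab
    simp only [Finset.mem_range] at ha hb
    have h1 : a * (2 * t) ≡ b * (2 * t) [MOD n] := hab
    have h2 : a ≡ b [MOD n / 2] := by
      have := Nat.ModEq.cancel_right_div_gcd hn h1
      rwa [hgcd] at this
    have ha2 : a < n / 2 := by omega
    have hb2 : b < n / 2 := by omega
    have := h2
    unfold Nat.ModEq at this
    rw [Nat.mod_eq_of_lt ha2, Nat.mod_eq_of_lt hb2] at this
    exact this
  set s : Finset ℕ := (Finset.range m).image f with hsdef
  have hcard : s.card = m := by
    rw [hsdef, Finset.card_image_of_injOn fun a ha b hb => hinj a ha b hb, Finset.card_range]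
  set T : ℕ := ∑ e ∈ s, 2 ^ e with hT
  have hTsum : T = ∑ j ∈ Finset.range m, 2 ^ (f j) := Finset.sum_image hinj
  -- congruence mod M
  have hpow : ∀ a : ℕ, 2 ^ a ≡ 2 ^ (a % n) [MOD M] := by
    intro a
    have hone : (2 : ℕ) ^ n ≡ 1 [MOD M] := by
      have h1 : 1 ≤ 2 ^ n := Nat.one_le_two_pow
      exact ((Nat.modEq_iff_dvd' h1).mpr (by rw [hM])).symm
    calc 2 ^ a = (2 ^ n) ^ (a / n) * 2 ^ (a % n) := by
          rw [← pow_mul, ← pow_add, Nat.div_add_mod]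
      _ ≡ 1 ^ (a / n) * 2 ^ (a % n) [MOD M] := ((hone.pow _).mul_right _)
      _ = 2 ^ (a % n) := by rw [one_pow, one_mul]
  have hcong : (∑ j ∈ Finset.range m, 2 ^ (j * (2 * t))) % M = T % M := by
    rw [Finset.sum_nat_mod, hTsum, Finset.sum_nat_mod (Finset.range m) M fun j => 2 ^ f j]
    congr 1
    exact Finset.sum_congr rfl fun j _ => hpow (j * (2 * t))
  -- T < M
  have hsub : s ⊆ Finset.range n := by
    intro e he
    rw [hsdef] at he
    obtain ⟨j, _, rfl⟩ := Finset.mem_image.mp he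
    exact Finset.mem_range.mpr (Nat.mod_lt _ hn)
  have hne : ∃ i ∈ Finset.range n, i ∉ s := by
    by_contra h
    push_neg at h
    have : Finset.range n ⊆ s := fun i hi => h i hi
    have := Finset.card_le_card this
    rw [hcard, Finset.card_range] at this
    omega
  obtain ⟨i, hi, hni⟩ := hne
  have hTlt : T < 2 ^ n - 1 := by
    have hlt : T < ∑ e ∈ Finset.range n, 2 ^ e :=
      Finset.sum_lt_sum_of_subset hsub hi hni (pow_pos (by norm_num) i)
        (fun _ _ _ => Nat.zero_le _)
    have hgeom : ∑ e ∈ Finset.range n, 2 ^ e = 2 ^ n - 1 := by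
      rw [Nat.geomSum_eq (le_refl 2)]
      norm_num
    rwa [hgeom] at hlt
  rw [hcong, Nat.mod_eq_of_lt hTlt, digitSum_sum_two_pow T s hT.symm, hcard]
end

section
/- Let n, t, m be natural numbers with gcd(n, 2t) = 2 and 0 < m < n/2. Then the binary Hamming weight of e(n/2 + m, 2t) reduced modulo 2^n - 1 equals n/2. -/
lemma geom3 (s : ℕ) : 3 * (∑ i ∈ Finset.range s, 4 ^ i) + 1 = 4 ^ s := by
  induction s with
  | zero => simp
  | succ s ih => rw [Finset.sum_range_succ, pow_succ]; omega

lemma digitsum (N : ℕ) : ∀ S : Finset ℕ, (∑ i ∈ S, 2^i) = N → (Nat.digits 2 N).sum = S.card := by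
  induction N using Nat.strong_induction_on with
  | _ N ih =>
    intro S hS
    rcases Finset.eq_empty_or_nonempty S with rfl | hne
    · simp at hS; simp [← hS]
    · have hN : 0 < N := hS ▸ Finset.sum_pos (fun i _ => pow_pos (by norm_num) i) hne
      have hinj : ∀ a ∈ S.erase 0, ∀ b ∈ S.erase 0, a - 1 = b - 1 → a = b := by
        intro a ha b hb h
        have ha' := Finset.ne_of_mem_erase ha
        have hb' := Finset.ne_of_mem_erase hb
        omega
      set T := (S.erase 0).image (fun x => x - 1) with hT
      have hsum : ∑ i ∈ T, 2^i = ∑ i ∈ S.erase 0, 2^(i-1) := Finset.sum_image hinj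
      have h2 : 2 * ∑ i ∈ T, 2^i = ∑ i ∈ S.erase 0, 2^i := by
        rw [hsum, Finset.mul_sum]
        apply Finset.sum_congr rfl
        intro i hi
        have hi' : i ≠ 0 := Finset.ne_of_mem_erase hi
        rw [← pow_succ']
        congr 1
        omega
      have hb : (if 0 ∈ S then 1 else 0) ≤ 1 := by split <;> norm_num
      have hsplitS : N = (if 0 ∈ S then 1 else 0) + ∑ i ∈ S.erase 0, 2^i := by
        by_cases h0 : 0 ∈ S
        · simp only [h0, if_true]
          rw [← hS, ← Finset.add_sum_erase S _ h0]
          norm_num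
        · simp [h0, Finset.erase_eq_of_notMem h0, hS]
      rw [Nat.digits_def' (by norm_num : (1:ℕ) < 2) hN, List.sum_cons]
      have hlt : N / 2 < N := Nat.div_lt_self hN one_lt_two
      have hTN : ∑ i ∈ T, 2^i = N / 2 := by omega
      rw [ih (N/2) hlt T hTN]
      have hcard : S.card = (if 0 ∈ S then 1 else 0) + T.card := by
        rw [hT, Finset.card_image_of_injOn (fun a ha b hb => hinj a ha b hb)]
        by_cases h0 : 0 ∈ S
        · have := Finset.card_pos.mpr hne
          simp only [h0, if_true, Finset.card_erase_of_mem h0]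
          omega
        · simp [h0, Finset.erase_eq_of_notMem h0]
      omega

theorem stmt_9 (n t m : ℕ) (hgcd : Nat.gcd n (2 * t) = 2) (hm : 0 < m) (hmn : 2 * m < n) :
    (Nat.digits 2 ((∑ j ∈ Finset.range (n / 2 + m), 2 ^ (j * (2 * t))) % (2 ^ n - 1))).sum
      = n / 2 := by
  have h2n : 2 ∣ n := hgcd ▸ Nat.gcd_dvd_left n (2*t)
  set s := n / 2 with hs
  have hns : n = 2 * s := by omega
  have hcop : Nat.Coprime s t := by
    have h := hgcd
    rw [hns, Nat.gcd_mul_left] at h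
    simpa [Nat.Coprime] using (by omega : Nat.gcd s t = 1)
  have hm' : m < s := by omega
  have hs1 : 1 ≤ s := by omega
  have hn0 : 0 < n := by omega
  set k := 2 * t with hk
  set e : ℕ → ℕ := fun j => j * k % n with he
  -- injectivity
  have heinj : ∀ j1 ∈ Finset.range s, ∀ j2 ∈ Finset.range s, e j1 = e j2 → j1 = j2 := by
    have key : ∀ j1 j2, j2 ≤ j1 → j1 < s → e j1 = e j2 → j1 = j2 := by
      intro j1 j2 hle h1 heq
      have hmeq : j2 * k ≡ j1 * k [MOD n] := by
        simpa [Nat.ModEq, he] using heq.symm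
      have hdvd : n ∣ j1 * k - j2 * k := (Nat.modEq_iff_dvd' (Nat.mul_le_mul_right k hle)).mp hmeq
      have hsub : j1 * k - j2 * k = (j1 - j2) * k := by
        rw [Nat.sub_mul]
      rw [hsub] at hdvd
      have hdvd2 : s ∣ (j1 - j2) * t := by
        rcases hdvd with ⟨c, hc⟩
        refine ⟨c, ?_⟩
        have h1 : (j1 - j2) * k = 2 * ((j1 - j2) * t) := by rw [hk]; ring
        have h2 : n * c = 2 * (s * c) := by rw [hns]; ring
        omega
      have := (Nat.Coprime.dvd_of_dvd_mul_right hcop) hdvd2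
      have hlt : j1 - j2 < s := by omega
      have := Nat.eq_zero_of_dvd_of_lt (by assumption) hlt |>.symm
      omega
    intro j1 h1 j2 h2 heq
    simp only [Finset.mem_range] at h1 h2
    rcases le_total j2 j1 with h | h
    · exact key j1 j2 h h1 heq
    · exact (key j2 j1 h h2 heq.symm).symm
  have heper : ∀ j, e (s + j) = e j := by
    intro j
    have : (s + j) * k = j * k + t * n := by rw [hns, hk]; ring
    simp [he, this, Nat.add_mul_mod_self_right]
  have heeven : ∀ j, 2 ∣ e j := by
    intro j
    rw [he]
    exact (Nat.dvd_mod_iff h2n).mpr ⟨j * t, by rw [hk]; ring⟩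
  have helt : ∀ j, e j < n := fun j => Nat.mod_lt _ hn0
  set M := 2 ^ n - 1 with hM
  have h2n1 : 1 ≤ 2 ^ n := Nat.one_le_two_pow
  -- modular reduction of powers
  have hmodpow : ∀ a : ℕ, 2 ^ a % M = 2 ^ (a % n) % M := by
    intro a
    conv_lhs => rw [← Nat.div_add_mod a n, pow_add, pow_mul]
    have h1 : (2:ℕ) ^ n ≡ 1 [MOD M] := by
      have : (2:ℕ)^n - 1 = M := rfl
      exact (Nat.modEq_iff_dvd' h2n1).mpr dvd_rfl |>.symm
    calc ((2^n) ^ (a / n) * 2 ^ (a % n)) % M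
        = ((2^n) ^ (a/n) % M * (2 ^ (a % n) % M)) % M := Nat.mul_mod _ _ _
      _ = (1 ^ (a/n) % M * (2 ^ (a % n) % M)) % M := by rw [(h1.pow (a/n) : _)]
      _ = 2 ^ (a % n) % M := by rw [one_pow]; rw [← Nat.mul_mod]; rw [one_mul]
  -- reduce the sum
  have hsumred : (∑ j ∈ Finset.range (s + m), 2 ^ (j * k)) % M
      = (∑ j ∈ Finset.range (s + m), 2 ^ (e j)) % M := by
    rw [Finset.sum_nat_mod, Finset.sum_congr rfl (fun j _ => hmodpow (j * k)),
      ← Finset.sum_nat_mod]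
  set A := ∑ j ∈ Finset.range s, 2 ^ (e j) with hA
  set B := ∑ j ∈ Finset.range m, 2 ^ (e j) with hB
  have hsplit : ∑ j ∈ Finset.range (s + m), 2 ^ (e j) = A + B := by
    rw [Finset.sum_range_add]
    congr 1
    exact Finset.sum_congr rfl fun j _ => by rw [heper j]
  -- A equals sum of 4^i
  have himgsub : (Finset.range s).image e ⊆ (Finset.range s).image (fun i => 2 * i) := by
    intro x hx
    simp only [Finset.mem_image, Finset.mem_range] at hx ⊢
    obtain ⟨j, hj, rfl⟩ := hx
    have h1 := heeven j
    have h2 := helt j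
    exact ⟨e j / 2, by omega, by omega⟩
  have himg : (Finset.range s).image e = (Finset.range s).image (fun i => 2 * i) := by
    apply Finset.eq_of_subset_of_card_le himgsub
    rw [Finset.card_image_of_injOn heinj,
      Finset.card_image_of_injective _ (fun a b h => by simpa using h : Function.Injective (fun i => 2*i))]
  have hAval : A = ∑ i ∈ Finset.range s, 4 ^ i := by
    rw [hA, ← Finset.sum_image heinj, himg,
      Finset.sum_image (fun a _ b _ h => by simpa using h)]
    exact Finset.sum_congr rfl fun i _ => by rw [pow_mul]; norm_num
  have hApos : 0 < A := by
    rw [hAval]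
    exact Finset.sum_pos (fun i _ => pow_pos (by norm_num) i) ⟨0, Finset.mem_range.mpr hs1⟩
  have hBA : B ≤ A := by
    rw [hA, hB]
    exact Finset.sum_le_sum_of_subset (Finset.range_subset_range.mpr hm'.le)
  clear_value A B M
  have hMval : 3 * A + 1 = 2 ^ n := by
    rw [hAval, geom3, hns, pow_mul]; norm_num
  have hNM : A + B < M := by omega
  have hfin : (∑ j ∈ Finset.range (s + m), 2 ^ (j * k)) % M = A + B := by
    rw [hsumred, hsplit, Nat.mod_eq_of_lt hNM]
  rw [hfin]
  -- digit sum
  set f : ℕ → ℕ := fun j => if j < m then e j + 1 else e j with hf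
  have hfinj : ∀ a ∈ Finset.range s, ∀ b ∈ Finset.range s, f a = f b → a = b := by
    intro a ha b hb hab
    rw [hf] at hab
    simp only at hab
    have hea := heeven a
    have heb := heeven b
    by_cases h1 : a < m <;> by_cases h2 : b < m <;> simp [h1, h2] at hab
    · exact heinj a ha b hb (by omega)
    · omega
    · omega
    · exact heinj a ha b hb hab
  have hABf : A + B = ∑ j ∈ Finset.range s, 2 ^ (f j) := by
    have hr : Finset.range s = Finset.range m ∪ Finset.Ico m s :=
      by rw [Finset.range_eq_Ico, ← Finset.Ico_union_Ico_eq_Ico (Nat.zero_le m) hm'.le, Finset.range_eq_Ico]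
    have hdisj : Disjoint (Finset.range m) (Finset.Ico m s) := by
      simp [Finset.disjoint_left, Finset.mem_Ico]
      omega
    rw [hA, hB, hr, Finset.sum_union hdisj, Finset.sum_union hdisj]
    have e1 : ∑ j ∈ Finset.range m, 2 ^ (f j) = ∑ j ∈ Finset.range m, (2 ^ (e j) + 2 ^ (e j)) := by
      apply Finset.sum_congr rfl
      intro j hj
      simp only [Finset.mem_range] at hj
      rw [hf]
      simp [hj, pow_succ]
      ring
    have e2 : ∑ j ∈ Finset.Ico m s, 2 ^ (f j) = ∑ j ∈ Finset.Ico m s, 2 ^ (e j) := by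
      apply Finset.sum_congr rfl
      intro j hj
      simp only [Finset.mem_Ico] at hj
      rw [hf]
      simp [Nat.not_lt.mpr hj.1]
    rw [e1, e2, Finset.sum_add_distrib]
    ring
  rw [hABf, ← Finset.sum_image hfinj]
  rw [digitsum _ _ rfl, Finset.card_image_of_injOn hfinj, Finset.card_range]
end

section
/- Let n, t, m be natural numbers with gcd(n, 2t) = 2 and 0 < m < n/2. Then e(3n/2 + m, 2t) ≡ e(m, 2t) (mod 2^n - 1). -/
theorem stmt_10 (n t m : ℕ) (hgcd : Nat.gcd n (2 * t) = 2) (hm : 0 < m) (hmn : 2 * m < n) :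
    Nat.ModEq (2 ^ n - 1)
      (∑ j ∈ Finset.range (3 * n / 2 + m), 2 ^ (j * (2 * t)))
      (∑ j ∈ Finset.range m, 2 ^ (j * (2 * t))) := by
  set k := 2 * t with hk
  set d := 2 ^ n - 1 with hd
  have h2n : 2 ∣ n := hgcd ▸ Nat.gcd_dvd_left n (2 * t)
  obtain ⟨s, hs⟩ := h2n
  have hn3 : 3 ≤ n := by omega
  have hone : 1 ≤ 2 ^ n := Nat.one_le_two_pow
  have honek : 1 ≤ 2 ^ k := Nat.one_le_two_pow
  set E : ℕ := ∑ j ∈ Finset.range s, 2 ^ (j * k) with hE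
  -- key divisibility : d ∣ 3 * E
  have key : d ∣ 3 * E := by
    set g := Nat.gcd d (2 ^ k - 1) with hg
    have hg3 : g ∣ 3 := by
      have hgd : g ∣ d := Nat.gcd_dvd_left _ _
      have hgk : g ∣ 2 ^ k - 1 := Nat.gcd_dvd_right _ _
      have h1 : (2 : ZMod g) ^ n = 1 := by
        have h0 := (ZMod.natCast_eq_zero_iff (2 ^ n - 1) g).mpr hgd
        have h2 : ((2 ^ n - 1 : ℕ) : ZMod g) = (2 : ZMod g) ^ n - 1 := by
          push_cast [Nat.cast_sub hone]; ring
        rw [h2] at h0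
        linear_combination h0
      have h2' : (2 : ZMod g) ^ k = 1 := by
        have h0 := (ZMod.natCast_eq_zero_iff (2 ^ k - 1) g).mpr hgk
        have h2 : ((2 ^ k - 1 : ℕ) : ZMod g) = (2 : ZMod g) ^ k - 1 := by
          push_cast [Nat.cast_sub honek]; ring
        rw [h2] at h0
        linear_combination h0
      have h3 : (2 : ZMod g) ^ Nat.gcd n k = 1 := by rw [pow_gcd_eq_one]; exact ⟨h1, h2'⟩
      rw [hgcd] at h3
      have h4 : ((3 : ℕ) : ZMod g) = 0 := by push_cast; linear_combination h3
      exact (ZMod.natCast_eq_zero_iff 3 g).mp h4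
    -- in ℤ : d ∣ (2^k - 1) * E
    have hAE : (E : ℤ) * ((2 : ℤ) ^ k - 1) = 2 ^ (n * t) - 1 := by
      have h1 : (E : ℤ) = ∑ j ∈ Finset.range s, ((2 : ℤ) ^ k) ^ j := by
        push_cast [hE, ← pow_mul]
        exact Finset.sum_congr rfl fun j _ => by rw [mul_comm]
      rw [h1, geom_sum_mul, ← pow_mul]
      congr 1
      rw [hk, hs]; ring
    have hdvdAE : (d : ℤ) ∣ (E : ℤ) * ((2 : ℤ) ^ k - 1) := by
      rw [hAE]
      have : ((d : ℕ) : ℤ) = (2 : ℤ) ^ n - 1 := by rw [hd]; push_cast [Nat.cast_sub hone]; ring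
      rw [this]
      have := sub_dvd_pow_sub_pow ((2 : ℤ) ^ n) 1 t
      simpa [← pow_mul] using this
    -- Bézout
    have hbez : (g : ℤ) = (d : ℤ) * Int.gcdA (d : ℤ) ((2 ^ k - 1 : ℕ) : ℤ) +
        ((2 ^ k - 1 : ℕ) : ℤ) * Int.gcdB (d : ℤ) ((2 ^ k - 1 : ℕ) : ℤ) := by
      have := Int.gcd_eq_gcd_ab (d : ℤ) ((2 ^ k - 1 : ℕ) : ℤ)
      rwa [Int.gcd_natCast_natCast] at this
    have hdgE : (d : ℤ) ∣ (g : ℤ) * (E : ℤ) := by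
      have hcast : ((2 ^ k - 1 : ℕ) : ℤ) = (2 : ℤ) ^ k - 1 := by
        push_cast [Nat.cast_sub honek]; ring
      obtain ⟨c, hc⟩ := hdvdAE
      have hc' : (E : ℤ) * ((2 ^ k - 1 : ℕ) : ℤ) = (d : ℤ) * c := by rw [hcast]; exact hc
      refine ⟨Int.gcdA (d : ℤ) ((2 ^ k - 1 : ℕ) : ℤ) * (E : ℤ) +
        Int.gcdB (d : ℤ) ((2 ^ k - 1 : ℕ) : ℤ) * c, ?_⟩
      calc (g : ℤ) * (E : ℤ)
          = ((d : ℤ) * Int.gcdA (d : ℤ) ((2 ^ k - 1 : ℕ) : ℤ) +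
            ((2 ^ k - 1 : ℕ) : ℤ) * Int.gcdB (d : ℤ) ((2 ^ k - 1 : ℕ) : ℤ)) * (E : ℤ) := by
            rw [← hbez]
        _ = (d : ℤ) * (Int.gcdA (d : ℤ) ((2 ^ k - 1 : ℕ) : ℤ) * (E : ℤ)) +
            Int.gcdB (d : ℤ) ((2 ^ k - 1 : ℕ) : ℤ) * ((E : ℤ) * ((2 ^ k - 1 : ℕ) : ℤ)) := by
            ring
        _ = (d : ℤ) * (Int.gcdA (d : ℤ) ((2 ^ k - 1 : ℕ) : ℤ) * (E : ℤ)) +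
            Int.gcdB (d : ℤ) ((2 ^ k - 1 : ℕ) : ℤ) * ((d : ℤ) * c) := by rw [hc']
        _ = (d : ℤ) * (Int.gcdA (d : ℤ) ((2 ^ k - 1 : ℕ) : ℤ) * (E : ℤ) +
            Int.gcdB (d : ℤ) ((2 ^ k - 1 : ℕ) : ℤ) * c) := by ring
    have hd3E : (d : ℤ) ∣ ((3 * E : ℕ) : ℤ) := by
      obtain ⟨c, hc⟩ := hg3
      obtain ⟨w, hw⟩ := hdgE
      refine ⟨c * w, ?_⟩
      push_cast [hc]
      linear_combination (c : ℤ) * hw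
    exact_mod_cast hd3E
  -- modular arithmetic
  have hsplit : 3 * n / 2 + m = m + (s + (s + s)) := by omega
  rw [hsplit, Finset.sum_range_add]
  have hblock : ∀ a : ℕ, (∑ j ∈ Finset.range s, 2 ^ ((a + j) * k)) = 2 ^ (a * k) * E := by
    intro a
    rw [hE, Finset.mul_sum]
    exact Finset.sum_congr rfl fun j _ => by rw [← pow_add, add_mul]
  have hshift : ∀ a : ℕ, (2 : ℕ) ^ ((a + s) * k) ≡ 2 ^ (a * k) [MOD d] := by
    intro a
    have h1 : (2 : ℕ) ^ n ≡ 1 [MOD d] := (Nat.modEq_iff_dvd' hone).mpr dvd_rfl |>.symm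
    have h2 : (2 : ℕ) ^ (s * k) ≡ 1 [MOD d] := by
      have : s * k = n * t := by rw [hk, hs]; ring
      rw [this, pow_mul]
      simpa using h1.pow t
    calc (2 : ℕ) ^ ((a + s) * k) = 2 ^ (a * k) * 2 ^ (s * k) := by rw [← pow_add, add_mul]
      _ ≡ 2 ^ (a * k) * 1 [MOD d] := (Nat.ModEq.refl _).mul h2
      _ = 2 ^ (a * k) := by ring
  have hmain : (∑ j ∈ Finset.range (s + (s + s)), 2 ^ ((m + j) * k)) ≡ 0 [MOD d] := by
    rw [Finset.sum_range_add, Finset.sum_range_add]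
    have hre : ∀ j, m + (s + j) = (m + s) + j := fun j => by omega
    have hre2 : ∀ j, m + s + (s + j) = (m + s + s) + j := fun j => by omega
    simp only [hre, hre2]
    rw [hblock m, hblock (m + s), hblock (m + s + s)]
    have e1 : (2 : ℕ) ^ ((m + s) * k) ≡ 2 ^ (m * k) [MOD d] := by
      have := hshift m; simpa using this
    have e2 : (2 : ℕ) ^ ((m + s + s) * k) ≡ 2 ^ (m * k) [MOD d] :=
      ((hshift (m + s)).trans e1)
    calc 2 ^ (m * k) * E + (2 ^ ((m + s) * k) * E + 2 ^ ((m + s + s) * k) * E)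
        ≡ 2 ^ (m * k) * E + (2 ^ (m * k) * E + 2 ^ (m * k) * E) [MOD d] :=
          (Nat.ModEq.refl _).add ((e1.mul_right E).add (e2.mul_right E))
      _ = 2 ^ (m * k) * (3 * E) := by ring
      _ ≡ 0 [MOD d] := (Nat.modEq_zero_iff_dvd).mpr (key.mul_left _)
  have := (Nat.ModEq.refl (∑ j ∈ Finset.range m, 2 ^ (j * k))).add hmain
  simpa using this
end

section
/- Let n, l, k be natural numbers with gcd(k, n) = 1 and 0 < l ≤ n. Then the binary Hamming weight of e(l, k) reduced modulo 2^n - 1 equals l. -/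
-- weight of a sum of distinct powers of two
lemma wt_aux : ∀ m : ℕ, ∀ s : Finset ℕ, (∀ i ∈ s, i < m) →
    (Nat.digits 2 (∑ i ∈ s, 2 ^ i)).sum = s.card := by
  intro m
  induction m with
  | zero =>
    intro s hs
    have : s = ∅ := Finset.eq_empty_of_forall_notMem (fun i hi => by simpa using hs i hi)
    simp [this]
  | succ m ih =>
    intro s hs
    set t : Finset ℕ := (s.erase 0).image (· - 1) with ht
    have hinj : Set.InjOn (· - 1) (s.erase 0) := by
      intro a ha b hb hab
      have ha0 : a ≠ 0 := Finset.ne_of_mem_erase ha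
      have hb0 : b ≠ 0 := Finset.ne_of_mem_erase hb
      dsimp only at hab
      omega
    have htlt : ∀ i ∈ t, i < m := by
      intro i hi
      rcases Finset.mem_image.1 hi with ⟨a, ha, rfl⟩
      have := hs a (Finset.mem_of_mem_erase ha)
      have ha0 : a ≠ 0 := Finset.ne_of_mem_erase ha
      omega
    have hsum : ∑ i ∈ s.erase 0, 2 ^ i = 2 * ∑ i ∈ t, 2 ^ i := by
      rw [ht, Finset.sum_image hinj, Finset.mul_sum]
      refine Finset.sum_congr rfl fun a ha => ?_
      have ha0 : a ≠ 0 := Finset.ne_of_mem_erase ha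
      rw [← pow_succ']
      congr 1
      omega
    by_cases h0 : 0 ∈ s
    · have hdecomp : ∑ i ∈ s, 2 ^ i = 1 + 2 * ∑ i ∈ t, 2 ^ i := by
        rw [← Finset.add_sum_erase _ _ h0, hsum, pow_zero]
      have hcard : s.card = t.card + 1 := by
        rw [ht, Finset.card_image_of_injOn hinj, Finset.card_erase_of_mem h0]
        have : 0 < s.card := Finset.card_pos.2 ⟨0, h0⟩
        omega
      rw [hdecomp, hcard]
      have hne : 1 + 2 * ∑ i ∈ t, 2 ^ i ≠ 0 := by omega
      rw [Nat.digits_def' (by norm_num : 1 < 2) (Nat.pos_of_ne_zero hne)]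
      simp only [List.sum_cons]
      have h1 : (1 + 2 * ∑ i ∈ t, 2 ^ i) % 2 = 1 := by omega
      have h2 : (1 + 2 * ∑ i ∈ t, 2 ^ i) / 2 = ∑ i ∈ t, 2 ^ i := by omega
      rw [h1, h2, ih t htlt]
      omega
    · have herase : s.erase 0 = s := Finset.erase_eq_of_notMem h0
      have hdecomp : ∑ i ∈ s, 2 ^ i = 2 * ∑ i ∈ t, 2 ^ i := by
        rw [← herase, hsum]
      have hcard : s.card = t.card := by
        rw [ht, Finset.card_image_of_injOn hinj, herase]
      by_cases hT : ∑ i ∈ t, 2 ^ i = 0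
      · have htemp : t = ∅ := by
          rw [Finset.sum_eq_zero_iff] at hT
          refine Finset.eq_empty_of_forall_notMem fun a ha => ?_
          have := hT a ha
          simp at this
        simp [hdecomp, hT, hcard, htemp]
      · rw [hdecomp, hcard]
        have hne : 2 * ∑ i ∈ t, 2 ^ i ≠ 0 := by omega
        rw [Nat.digits_def' (by norm_num : 1 < 2) (Nat.pos_of_ne_zero hne)]
        simp only [List.sum_cons]
        have h1 : (2 * ∑ i ∈ t, 2 ^ i) % 2 = 0 := by omega
        have h2 : (2 * ∑ i ∈ t, 2 ^ i) / 2 = ∑ i ∈ t, 2 ^ i := by omega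
        rw [h1, h2, ih t htlt]
        omega

theorem stmt_12 (n l k : ℕ) (hkn : Nat.gcd k n = 1) (hl : 0 < l) (hln : l ≤ n) :
    (Nat.digits 2 (((∑ j ∈ Finset.range l, 2 ^ (j * k)) - 1) % (2 ^ n - 1) + 1)).sum = l := by
  have hn : 0 < n := lt_of_lt_of_le hl hln
  set m := 2 ^ n - 1 with hm
  set S := ∑ j ∈ Finset.range l, 2 ^ (j * k) with hS
  set T := ∑ j ∈ Finset.range l, 2 ^ (j * k % n) with hT
  have h2n : 1 ≤ 2 ^ n := Nat.one_le_two_pow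
  have hpow : (2 : ℕ) ^ n ≡ 1 [MOD m] := by
    symm
    rw [Nat.modEq_iff_dvd' h2n]
  -- termwise congruence
  have hterm : ∀ a : ℕ, (2 : ℕ) ^ a ≡ 2 ^ (a % n) [MOD m] := by
    intro a
    conv_lhs => rw [← Nat.div_add_mod a n]
    rw [pow_add, pow_mul]
    calc ((2:ℕ) ^ n) ^ (a / n) * 2 ^ (a % n)
        ≡ 1 ^ (a / n) * 2 ^ (a % n) [MOD m] := (hpow.pow _).mul_right _
      _ = 2 ^ (a % n) := by rw [one_pow, one_mul]
  have hmod : S % m = T % m := by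
    rw [hS, hT, Finset.sum_nat_mod]
    conv_rhs => rw [Finset.sum_nat_mod]
    congr 1
    exact Finset.sum_congr rfl fun j _ => hterm (j * k)
  -- T as a sum over an injective image
  have hinj : Set.InjOn (fun j => j * k % n) (Finset.range l) := by
    intro a ha b hb hab
    simp only [Finset.coe_range, Set.mem_Iio] at ha hb
    dsimp only at hab
    have : a ≡ b [MOD n] := by
      have h1 : a * k ≡ b * k [MOD n] := by
        unfold Nat.ModEq
        omega
      exact h1.cancel_right_of_coprime (by rwa [Nat.gcd_comm])
    have := Nat.ModEq.eq_of_lt_of_lt this (lt_of_lt_of_le ha hln) (lt_of_lt_of_le hb hln)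
    exact this
  set s : Finset ℕ := (Finset.range l).image (fun j => j * k % n) with hs
  have hTs : T = ∑ i ∈ s, 2 ^ i := by
    rw [hs, Finset.sum_image hinj]
  have hslt : ∀ i ∈ s, i < n := by
    intro i hi
    rcases Finset.mem_image.1 hi with ⟨a, _, rfl⟩
    exact Nat.mod_lt _ hn
  have hcard : s.card = l := by
    rw [hs, Finset.card_image_of_injOn hinj, Finset.card_range]
  -- bounds on T
  have hT1 : 1 ≤ T := by
    rw [hTs]
    have hs0 : s.Nonempty := Finset.card_pos.1 (by omega)
    rcases hs0 with ⟨a, ha⟩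
    calc 1 ≤ 2 ^ a := Nat.one_le_two_pow
      _ ≤ ∑ i ∈ s, 2 ^ i := Finset.single_le_sum (fun i _ => Nat.zero_le _) ha
  have hTle : T < 2 ^ n := by
    rw [hTs]; exact Nat.geomSum_lt (by norm_num) hslt
  have hS1 : 1 ≤ S := by
    rw [hS]
    have : (0:ℕ) ∈ Finset.range l := Finset.mem_range.2 hl
    calc 1 ≤ 2 ^ (0 * k) := by norm_num
      _ ≤ S := Finset.single_le_sum (f := fun j => 2 ^ (j * k)) (fun i _ => Nat.zero_le _) this
  have hm1 : 1 ≤ m := by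
    have : 2 ≤ 2 ^ n := by
      calc 2 = 2^1 := (pow_one 2).symm
        _ ≤ 2 ^ n := Nat.pow_le_pow_right (by norm_num) hn
    omega
  -- (S-1) % m = T - 1
  have hkey : (S - 1) % m = T - 1 := by
    have hsub : (S - 1) % m = (T - 1) % m := by
      have h1 : S - 1 ≡ T - 1 [MOD m] := by
        have : (S - 1) + 1 ≡ (T - 1) + 1 [MOD m] := by
          rw [Nat.sub_add_cancel hS1, Nat.sub_add_cancel hT1]
          exact hmod
        exact Nat.ModEq.add_right_cancel' 1 this
      exact h1
    rw [hsub, Nat.mod_eq_of_lt (by omega)]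
  rw [hkey, Nat.sub_add_cancel hT1, hTs, wt_aux n s hslt, hcard]
end

section
/- Let n be an odd natural number with n ≥ 3, and r a natural number with gcd(n, r) = 1. Then (2^r + 1) · ∑_{i=0}^{(n-1)/2} 2^{2ir} ≡ 1 (mod 2^n - 1); that is, the inverse of the Gold exponent 2^r + 1 modulo 2^n - 1 is e((n+1)/2, 2r) = ∑_{i=0}^{(n-1)/2} 2^{2ir}. -/
lemma aux_split (r : ℕ) : ∀ m : ℕ,
    (2 ^ r + 1) * ∑ i ∈ Finset.range m, 2 ^ (2 * i * r)
      = ∑ j ∈ Finset.range (2 * m), 2 ^ (j * r) := by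
  intro m
  induction m with
  | zero => simp
  | succ m ih =>
    have h2m : 2 * (m + 1) = (2 * m + 1) + 1 := by ring
    rw [Finset.sum_range_succ, mul_add, ih, h2m, Finset.sum_range_succ,
      Finset.sum_range_succ]
    have h1 : (2 * m + 1) * r = 2 * m * r + r := by ring
    rw [h1, pow_add]
    ring

theorem stmt_13 (n r : ℕ) (hodd : Odd n) (hn : 3 ≤ n) (hgcd : Nat.gcd n r = 1) :
    Nat.ModEq (2 ^ n - 1)
      ((2 ^ r + 1) * ∑ i ∈ Finset.range ((n - 1) / 2 + 1), 2 ^ (2 * i * r)) 1 := by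
  obtain ⟨k, hk⟩ := hodd
  have h2m : 2 * ((n - 1) / 2 + 1) = n + 1 := by omega
  rw [aux_split, h2m]
  haveI : NeZero n := ⟨by omega⟩
  set M := 2 ^ n - 1 with hM
  have hpow : 1 ≤ 2 ^ n := Nat.one_le_two_pow
  apply (ZMod.natCast_eq_natCast_iff _ _ _).mp
  push_cast
  have h2n : (2 : ZMod M) ^ n = 1 := by
    have : ((2 ^ n : ℕ) : ZMod M) = ((M + 1 : ℕ) : ZMod M) := by
      congr 1; omega
    push_cast at this
    rw [ZMod.natCast_self] at this
    simpa using this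
  have hred : ∀ a : ℕ, (2 : ZMod M) ^ a = 2 ^ (a % n) := by
    intro a
    conv_lhs => rw [← Nat.div_add_mod a n]
    rw [pow_add, pow_mul, h2n, one_pow, one_mul]
  rw [Finset.sum_range_succ]
  have hlast : (2 : ZMod M) ^ (n * r) = 1 := by rw [pow_mul, h2n, one_pow]
  rw [hlast]
  have hco : Nat.Coprime r n := Nat.Coprime.symm hgcd
  set u : (ZMod n)ˣ := ZMod.unitOfCoprime r hco with hu
  have hsum1 : ∑ j ∈ Finset.range n, (2 : ZMod M) ^ (j * r)
      = ∑ x : ZMod n, (2 : ZMod M) ^ ((x * (r : ZMod n)).val) := by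
    refine Finset.sum_nbij' (fun j => ((j : ZMod n))) (fun x => x.val) ?_ ?_ ?_ ?_ ?_
    · intro a _; exact Finset.mem_univ _
    · intro x _; exact Finset.mem_range.mpr (ZMod.val_lt x)
    · intro a ha; simp [ZMod.val_cast_of_lt (Finset.mem_range.mp ha)]
    · intro x _; simp [ZMod.natCast_val, ZMod.cast_id]
    · intro a ha
      rw [hred, ZMod.val_mul, ZMod.val_cast_of_lt (Finset.mem_range.mp ha),
        ZMod.val_natCast, Nat.mul_mod, Nat.mod_eq_of_lt (Finset.mem_range.mp ha)]
  have hsum2 : ∑ x : ZMod n, (2 : ZMod M) ^ ((x * (r : ZMod n)).val)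
      = ∑ x : ZMod n, (2 : ZMod M) ^ x.val := by
    apply Fintype.sum_equiv (Units.mulRight u)
    intro x
    simp [hu, Units.mulRight, ZMod.coe_unitOfCoprime]
  have hsum3 : ∑ x : ZMod n, (2 : ZMod M) ^ x.val
      = ∑ j ∈ Finset.range n, (2 : ZMod M) ^ j := by
    refine Finset.sum_nbij' (fun (x : ZMod n) => x.val) (fun j => ((j : ZMod n))) ?_ ?_ ?_ ?_ ?_
    · intro x _; exact Finset.mem_range.mpr (ZMod.val_lt x)
    · intro a _; exact Finset.mem_univ _
    · intro x _; simp [ZMod.natCast_val, ZMod.cast_id]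
    · intro a ha; simp [ZMod.val_cast_of_lt (Finset.mem_range.mp ha)]
    · intro a _; rfl
  have hgeom : ∑ j ∈ Finset.range n, (2 : ZMod M) ^ j = 0 := by
    have h := geom_sum_mul (2 : ZMod M) n
    rw [h2n] at h
    have h21 : (2 : ZMod M) - 1 = 1 := by ring
    rw [h21, mul_one] at h
    simpa using h
  rw [hsum1, hsum2, hsum3, hgeom]
  simp
end

section
/- Let n = 2t + 1 with t > 2 a natural number. Then there exist no natural numbers a, i with 0 < i < n and a < n such that 2^a · (2^{2i} + 2^i + 1) ≡ 2^t + 2 + 1 (mod 2^n - 1). In other words, the Welch exponent 2^t + 3 is never in the cyclotomic coset of e(3, i) = 2^{2i} + 2^i + 1 modulo 2^n - 1. -/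
private lemma two_pow_not_dvd (a s : ℕ) (hs : 2^(a+1) ∣ s) : ¬ 2^(a+1) ∣ 2^a + s := by
  intro h
  have hb : (2:ℕ)^(a+1) ∣ 2^a := by
    have h2 := Nat.dvd_sub h hs
    rwa [Nat.add_sub_cancel] at h2
  have := (Nat.pow_dvd_pow_iff_le_right (by norm_num : (1:ℕ) < 2)).mp hb
  omega

private lemma two_pow_pair (b c e f : ℕ) (hbc : b < c) (hef : e < f)
    (h : 2^b + 2^c = 2^e + 2^f) : b = e ∧ c = f := by
  have hbe : b = e := by
    rcases lt_trichotomy b e with hlt | he | hgt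
    · exfalso
      apply two_pow_not_dvd b (2^c) (pow_dvd_pow 2 (by omega))
      rw [h]
      exact Nat.dvd_add (pow_dvd_pow 2 (by omega)) (pow_dvd_pow 2 (by omega))
    · exact he
    · exfalso
      apply two_pow_not_dvd e (2^f) (pow_dvd_pow 2 (by omega))
      rw [← h]
      exact Nat.dvd_add (pow_dvd_pow 2 (by omega)) (pow_dvd_pow 2 (by omega))
  subst hbe
  have hcf : (2:ℕ)^c = 2^f := by omega
  exact ⟨rfl, Nat.pow_right_injective (by norm_num) hcf⟩

private lemma two_pow_triple (a b c d e f : ℕ) (h1 : a < b) (h2 : b < c) (h3 : d < e)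
    (h4 : e < f) (h : 2^a + 2^b + 2^c = 2^d + 2^e + 2^f) : a = d ∧ b = e ∧ c = f := by
  have had : a = d := by
    rcases lt_trichotomy a d with hlt | he | hgt
    · exfalso
      apply two_pow_not_dvd a (2^b + 2^c)
        (Nat.dvd_add (pow_dvd_pow 2 (by omega)) (pow_dvd_pow 2 (by omega)))
      rw [← Nat.add_assoc, h]
      exact Nat.dvd_add (Nat.dvd_add (pow_dvd_pow 2 (by omega)) (pow_dvd_pow 2 (by omega)))
        (pow_dvd_pow 2 (by omega))
    · exact he
    · exfalso
      apply two_pow_not_dvd d (2^e + 2^f)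
        (Nat.dvd_add (pow_dvd_pow 2 (by omega)) (pow_dvd_pow 2 (by omega)))
      rw [← Nat.add_assoc, ← h]
      exact Nat.dvd_add (Nat.dvd_add (pow_dvd_pow 2 (by omega)) (pow_dvd_pow 2 (by omega)))
        (pow_dvd_pow 2 (by omega))
  subst had
  have hrest : (2:ℕ)^b + 2^c = 2^e + 2^f := by omega
  obtain ⟨hbe, hcf⟩ := two_pow_pair b c e f h2 h4 hrest
  exact ⟨rfl, hbe, hcf⟩

private lemma pow_mod_cycle (n k : ℕ) (hn : 0 < n) :
    Nat.ModEq (2^n - 1) (2^k) (2^(k % n)) := by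
  have h1 : (2:ℕ)^n ≡ 1 [MOD 2^n - 1] :=
    ((Nat.modEq_iff_dvd' (Nat.one_le_two_pow)).mpr dvd_rfl).symm
  calc (2:ℕ)^k = (2^n)^(k/n) * 2^(k%n) := by
        rw [← pow_mul, ← pow_add, Nat.div_add_mod]
    _ ≡ 1^(k/n) * 2^(k%n) [MOD 2^n - 1] := Nat.ModEq.mul_right _ (h1.pow _)
    _ = 2^(k%n) := by rw [one_pow, one_mul]

private lemma finish_mod (n u v : ℕ) (hu : u < n) (hv : v < n)
    (h : ((u:ℕ):ZMod n) = ((v:ℕ):ZMod n)) : u = v := by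
  have h2 := (ZMod.natCast_eq_natCast_iff u v n).mp h
  unfold Nat.ModEq at h2
  rwa [Nat.mod_eq_of_lt hu, Nat.mod_eq_of_lt hv] at h2

private lemma main_case (n t p q r : ℕ) (ht : 2 < t) (htn : n = 2*t + 1)
    (hp : p < q) (hq : q < r) (hr : r < n)
    (heq : Nat.ModEq (2^n - 1) (2^p + 2^q + 2^r) (2^t + 2 + 1)) :
    p = 0 ∧ q = 1 ∧ r = t := by
  have hK : 1 < 2^(n-3) := Nat.one_lt_two_pow_iff.mpr (by omega)
  have e0 : (2:ℕ)^n = 2 * 2^(n-1) := by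
    rw [← pow_succ', show n-1+1 = n by omega]
  have e1 : (2:ℕ)^(n-1) = 2 * 2^(n-2) := by
    rw [← pow_succ', show n-2+1 = n-1 by omega]
  have e2 : (2:ℕ)^(n-2) = 2 * 2^(n-3) := by
    rw [← pow_succ', show n-3+1 = n-2 by omega]
  have hp' : (2:ℕ)^p ≤ 2^(n-3) := Nat.pow_le_pow_right (by norm_num) (by omega)
  have hq' : (2:ℕ)^q ≤ 2^(n-2) := Nat.pow_le_pow_right (by norm_num) (by omega)
  have hr' : (2:ℕ)^r ≤ 2^(n-1) := Nat.pow_le_pow_right (by norm_num) (by omega)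
  have ht' : (2:ℕ)^t ≤ 2^(n-3) := Nat.pow_le_pow_right (by norm_num) (by omega)
  have hlhs : 2^p + 2^q + 2^r < 2^n - 1 := by omega
  have hrhs : 2^t + 2 + 1 < 2^n - 1 := by omega
  have heqn : 2^p + 2^q + 2^r = 2^t + 2 + 1 := by
    have h2 := heq
    unfold Nat.ModEq at h2
    rwa [Nat.mod_eq_of_lt hlhs, Nat.mod_eq_of_lt hrhs] at h2
  have := two_pow_triple p q r 0 1 t hp hq (by norm_num) (by omega)
    (by rw [heqn, pow_zero, pow_one]; ring)
  exact this

theorem stmt_15 (n t : ℕ) (ht : 2 < t) (hn : n = 2 * t + 1) :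
    ¬ ∃ a i : ℕ, 0 < i ∧ i < n ∧ a < n ∧
      Nat.ModEq (2 ^ n - 1) (2 ^ a * (2 ^ (2 * i) + 2 ^ i + 1)) (2 ^ t + 2 + 1) := by
  rintro ⟨a, i, hi0, hin, han, hmod⟩
  have hn0 : 0 < n := by omega
  set x := a % n with hxd
  set y := (a + i) % n with hyd
  set z := (a + 2*i) % n with hzd
  have hxlt : x < n := Nat.mod_lt _ hn0
  have hylt : y < n := Nat.mod_lt _ hn0
  have hzlt : z < n := Nat.mod_lt _ hn0
  -- congruence
  have hprod : 2^a * (2^(2*i) + 2^i + 1) = 2^a + 2^(a+i) + 2^(a+2*i) := by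
    rw [pow_add, pow_add]; ring
  have hcong : Nat.ModEq (2^n - 1) (2^x + 2^y + 2^z) (2^t + 2 + 1) := by
    have h1 := (pow_mod_cycle n a hn0).symm
    have h2 := (pow_mod_cycle n (a+i) hn0).symm
    have h3 := (pow_mod_cycle n (a+2*i) hn0).symm
    have h4 : Nat.ModEq (2^n - 1) (2^x + 2^y + 2^z) (2^a + 2^(a+i) + 2^(a+2*i)) :=
      (h1.add h2).add h3
    exact h4.trans (hprod ▸ hmod)
  -- distinctness
  have hndvd : ¬ n ∣ i := fun h => by have := Nat.le_of_dvd hi0 h; omega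
  have hxy : x ≠ y := by
    intro h
    apply hndvd
    have : a ≡ a + i [MOD n] := h
    have := (Nat.modEq_iff_dvd' (by omega)).mp this
    simpa using this
  have hyz : y ≠ z := by
    intro h
    apply hndvd
    have : a + i ≡ a + 2*i [MOD n] := h
    have h5 := (Nat.modEq_iff_dvd' (by omega)).mp this
    rwa [show a + 2*i - (a + i) = i by omega] at h5
  have hxz : x ≠ z := by
    intro h
    have : a ≡ a + 2*i [MOD n] := h
    have h2 := (Nat.modEq_iff_dvd' (by omega)).mp this
    have h2 : n ∣ 2*i := by simpa using h2
    obtain ⟨c, hc⟩ := h2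
    have hc1 : c ≠ 0 := by rintro rfl; omega
    have hc2 : c < 2 := by
      by_contra hge
      have : n * 2 ≤ n * c := Nat.mul_le_mul (le_refl n) (by omega)
      omega
    have hc3 : c = 1 := by omega
    subst hc3
    omega
  -- key AP relation in ZMod n
  have hkey : ((x:ℕ) : ZMod n) + ((z:ℕ) : ZMod n) = 2 * ((y:ℕ) : ZMod n) := by
    rw [hxd, hyd, hzd]
    push_cast [ZMod.natCast_mod]
    ring
  have hmain := main_case n t
  rcases lt_trichotomy x y with h1 | h1 | h1
  · rcases lt_trichotomy y z with h2 | h2 | h2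
    · -- x < y < z
      obtain ⟨hx0, hy1, hz2⟩ := hmain x y z ht hn h1 h2 hzlt hcong
      rw [hx0, hy1, hz2] at hkey
      have h3 : ((t:ℕ) : ZMod n) = ((2:ℕ) : ZMod n) := by
        push_cast at hkey ⊢; linear_combination hkey
      have := finish_mod n t 2 (by omega) (by omega) h3
      omega
    · exact hyz h2
    · rcases lt_trichotomy x z with h3 | h3 | h3
      · -- x < z < y
        obtain ⟨hx0, hz1, hy2⟩ := hmain x z y ht hn h3 h2 hylt
          (by rw [show 2^x+2^z+2^y = 2^x+2^y+2^z from by ring]; exact hcong)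
        rw [hx0, hz1, hy2] at hkey
        have h4 : ((1:ℕ) : ZMod n) = ((2*t:ℕ) : ZMod n) := by
          push_cast at hkey ⊢; linear_combination hkey
        have := finish_mod n 1 (2*t) (by omega) (by omega) h4
        omega
      · exact hxz h3
      · -- z < x < y
        obtain ⟨hz0, hx1, hy2⟩ := hmain z x y ht hn h3 h1 hylt
          (by rw [show 2^z+2^x+2^y = 2^x+2^y+2^z from by ring]; exact hcong)
        rw [hz0, hx1, hy2] at hkey
        have h4 : ((1:ℕ) : ZMod n) = ((2*t:ℕ) : ZMod n) := by
          push_cast at hkey ⊢; linear_combination hkey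
        have := finish_mod n 1 (2*t) (by omega) (by omega) h4
        omega
  · exact hxy h1
  · rcases lt_trichotomy x z with h2 | h2 | h2
    · -- y < x < z
      obtain ⟨hy0, hx1, hz2⟩ := hmain y x z ht hn h1 h2 hzlt
        (by rw [show 2^y+2^x+2^z = 2^x+2^y+2^z from by ring]; exact hcong)
      rw [hy0, hx1, hz2] at hkey
      have h4 : ((1+t:ℕ) : ZMod n) = ((0:ℕ) : ZMod n) := by
        push_cast at hkey ⊢; linear_combination hkey
      have := finish_mod n (1+t) 0 (by omega) (by omega) h4
      omega
    · exact hxz h2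
    · rcases lt_trichotomy y z with h3 | h3 | h3
      · -- y < z < x
        obtain ⟨hy0, hz1, hx2⟩ := hmain y z x ht hn h3 h2 hxlt
          (by rw [show 2^y+2^z+2^x = 2^x+2^y+2^z from by ring]; exact hcong)
        rw [hy0, hz1, hx2] at hkey
        have h4 : ((1+t:ℕ) : ZMod n) = ((0:ℕ) : ZMod n) := by
          push_cast at hkey ⊢; linear_combination hkey
        have := finish_mod n (1+t) 0 (by omega) (by omega) h4
        omega
      · exact hyz h3
      · -- z < y < x
        obtain ⟨hz0, hy1, hx2⟩ := hmain z y x ht hn h3 h1 hxlt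
          (by rw [show 2^z+2^y+2^x = 2^x+2^y+2^z from by ring]; exact hcong)
        rw [hz0, hy1, hx2] at hkey
        have h4 : ((t:ℕ) : ZMod n) = ((2:ℕ) : ZMod n) := by
          push_cast at hkey ⊢; linear_combination hkey
        have := finish_mod n t 2 (by omega) (by omega) h4
        omega
end

section
/- Let n = 2t + 1 with t > 2 a natural number, and let W = 2^t + 2 + 1 be the Welch exponent. Then there exist no natural numbers a < n, k < n, and 1 ≤ l < n such that e(l,k) · (2^t + 2 + 1) ≡ 2^a (mod 2^n - 1). Equivalently, the inverse of W modulo 2^n - 1 is never in the cyclotomic coset of any e(l,k). -/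
set_option maxHeartbeats 4000000

theorem two_pow_sum_inj {s t : Finset ℕ} (h : ∑ i ∈ s, 2^i = ∑ i ∈ t, 2^i) : s = t := by
  have key : ∀ u : Finset ℕ, (∑ i ∈ u, 2^i).bitIndices = u.sort (· ≤ ·) := by
    intro u
    have hs : (u.sort (· ≤ ·)).SortedLT := Finset.sortedLT_sort u
    have h2 := Nat.bitIndices_twoPowsum hs
    have h3 : ((u.sort (· ≤ ·)).map (fun i => 2^i)).sum = ∑ i ∈ u, 2^i := by
      rw [← Finset.sum_map_toList]
      exact List.Perm.sum_eq (List.Perm.map _ (Finset.sort_perm_toList u (· ≤ ·)))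
    rwa [h3] at h2
  have h4 : s.sort (· ≤ ·) = t.sort (· ≤ ·) := by rw [← key, ← key, h]
  have h5 := congrArg List.toFinset h4
  rwa [Finset.sort_toFinset, Finset.sort_toFinset] at h5

theorem fsum2 (p q : ℕ) (h : p ≠ q) :
    ∑ i ∈ ({p, q} : Finset ℕ), 2^i = 2^p + 2^q := by
  rw [Finset.sum_insert (by simp [h]), Finset.sum_singleton]

theorem fsum3 (p q r : ℕ) (h1 : p ≠ q) (h2 : p ≠ r) (h3 : q ≠ r) :
    ∑ i ∈ ({p, q, r} : Finset ℕ), 2^i = 2^p + 2^q + 2^r := by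
  rw [Finset.sum_insert (by simp [h1, h2]), fsum2 q r h3]; ring

theorem fsum4 (p q r s : ℕ) (h1 : p ≠ q) (h2 : p ≠ r) (h3 : p ≠ s) (h4 : q ≠ r)
    (h5 : q ≠ s) (h6 : r ≠ s) :
    ∑ i ∈ ({p, q, r, s} : Finset ℕ), 2^i = 2^p + 2^q + 2^r + 2^s := by
  rw [Finset.sum_insert (by simp [h1, h2, h3]), fsum3 q r s h4 h5 h6]; ring

theorem modchar (x n : ℕ) (hn : 0 < n) (hx : x < 2*n) :
    x % n < n ∧ (x % n = x ∨ x % n + n = x) := by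
  refine ⟨Nat.mod_lt _ hn, ?_⟩
  rcases Nat.lt_or_ge x n with h | h
  · left; exact Nat.mod_eq_of_lt h
  · right; rw [Nat.mod_eq_sub_mod h, Nat.mod_eq_of_lt (by omega)]; omega

theorem KEY (n t u a δ ω α β : ℕ) (ht : 2 < t) (hn : n = 2*t+1)
    (ha : a < n) (hδlt : δ < n) (hu : u < n) (hδa : δ ≠ a)
    (hω : ω = 0 ∨ ω = n)
    (hα : α < n ∧ (α = u + t ∨ α + n = u + t))
    (hβ : β < n ∧ (β = u + 1 ∨ β + n = u + 1))
    (heq : 2^α + 2^β + 2^u + 2^a = 2^δ + 2^t + 2^1 + 2^ω) : False := by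
  have hαβ : α ≠ β := by omega
  have hαu : α ≠ u := by omega
  have hβu : β ≠ u := by omega
  have hL : ∃ S : Finset ℕ, (∑ i ∈ S, 2^i = 2^α + 2^β + 2^u + 2^a) ∧
      ((S = {α, β, u, a} ∧ a ≠ α ∧ a ≠ β ∧ a ≠ u)
      ∨ (S = {α+1, β, u} ∧ a = α ∧ α+1 ≠ β ∧ α+1 ≠ u)
      ∨ (S = {β+1, u} ∧ a = α ∧ α+1 = β ∧ β+1 ≠ u)
      ∨ (S = {u+1} ∧ a = α ∧ α+1 = β ∧ β+1 = u)
      ∨ (S = {u+1, β} ∧ a = α ∧ α+1 = u ∧ u+1 ≠ β)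
      ∨ (S = {β+1} ∧ a = α ∧ α+1 = u ∧ u+1 = β)
      ∨ (S = {β+1, α, u} ∧ a = β ∧ β+1 ≠ α ∧ β+1 ≠ u)
      ∨ (S = {α+1, u} ∧ a = β ∧ β+1 = α ∧ α+1 ≠ u)
      ∨ (S = {u+1} ∧ a = β ∧ β+1 = α ∧ α+1 = u)
      ∨ (S = {u+1, α} ∧ a = β ∧ β+1 = u ∧ u+1 ≠ α)
      ∨ (S = {α+1} ∧ a = β ∧ β+1 = u ∧ u+1 = α)
      ∨ (S = {u+1, α, β} ∧ a = u ∧ u+1 ≠ α ∧ u+1 ≠ β)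
      ∨ (S = {α+1, β} ∧ a = u ∧ u+1 = α ∧ α+1 ≠ β)
      ∨ (S = {β+1} ∧ a = u ∧ u+1 = α ∧ α+1 = β)
      ∨ (S = {β+1, α} ∧ a = u ∧ u+1 = β ∧ β+1 ≠ α)
      ∨ (S = {α+1} ∧ a = u ∧ u+1 = β ∧ β+1 = α)) := by
    rcases eq_or_ne a α with h1 | h1
    · rcases eq_or_ne (α+1) β with h2 | h2
      · rcases eq_or_ne (β+1) u with h3 | h3
        · exact ⟨{u+1}, by rw [Finset.sum_singleton, h1, ← h3, ← h2]; ring,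
            Or.inr (Or.inr (Or.inr (Or.inl ⟨rfl, h1, h2, h3⟩)))⟩
        · exact ⟨{β+1, u}, by rw [fsum2 _ _ h3, h1, ← h2]; ring,
            Or.inr (Or.inr (Or.inl ⟨rfl, h1, h2, h3⟩))⟩
      · rcases eq_or_ne (α+1) u with h2u | h2u
        · rcases eq_or_ne (u+1) β with h3 | h3
          · exact ⟨{β+1}, by rw [Finset.sum_singleton, h1, ← h3, ← h2u]; ring,
              Or.inr (Or.inr (Or.inr (Or.inr (Or.inr (Or.inl ⟨rfl, h1, h2u, h3⟩)))))⟩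
          · exact ⟨{u+1, β}, by rw [fsum2 _ _ h3, h1, ← h2u]; ring,
              Or.inr (Or.inr (Or.inr (Or.inr (Or.inl ⟨rfl, h1, h2u, h3⟩))))⟩
        · exact ⟨{α+1, β, u}, by rw [fsum3 _ _ _ h2 h2u hβu, h1]; ring,
            Or.inr (Or.inl ⟨rfl, h1, h2, h2u⟩)⟩
    · rcases eq_or_ne a β with h1b | h1b
      · rcases eq_or_ne (β+1) α with h2 | h2
        · rcases eq_or_ne (α+1) u with h3 | h3
          · refine ⟨{u+1}, by rw [Finset.sum_singleton, h1b, ← h3, ← h2]; ring, ?_⟩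
            iterate 8 right
            exact Or.inl ⟨rfl, h1b, h2, h3⟩
          · refine ⟨{α+1, u}, by rw [fsum2 _ _ h3, h1b, ← h2]; ring, ?_⟩
            iterate 7 right
            exact Or.inl ⟨rfl, h1b, h2, h3⟩
        · rcases eq_or_ne (β+1) u with h2b | h2b
          · rcases eq_or_ne (u+1) α with h3 | h3
            · refine ⟨{α+1}, by rw [Finset.sum_singleton, h1b, ← h3, ← h2b]; ring, ?_⟩
              iterate 10 right
              exact Or.inl ⟨rfl, h1b, h2b, h3⟩
            · refine ⟨{u+1, α}, by rw [fsum2 _ _ h3, h1b, ← h2b]; ring, ?_⟩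
              iterate 9 right
              exact Or.inl ⟨rfl, h1b, h2b, h3⟩
          · refine ⟨{β+1, α, u}, by rw [fsum3 _ _ _ h2 h2b hαu, h1b]; ring, ?_⟩
            iterate 6 right
            exact Or.inl ⟨rfl, h1b, h2, h2b⟩
      · rcases eq_or_ne a u with h1u | h1u
        · rcases eq_or_ne (u+1) α with h2 | h2
          · rcases eq_or_ne (α+1) β with h3 | h3
            · refine ⟨{β+1}, by rw [Finset.sum_singleton, h1u, ← h3, ← h2]; ring, ?_⟩
              iterate 13 right
              exact Or.inl ⟨rfl, h1u, h2, h3⟩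
            · refine ⟨{α+1, β}, by rw [fsum2 _ _ h3, h1u, ← h2]; ring, ?_⟩
              iterate 12 right
              exact Or.inl ⟨rfl, h1u, h2, h3⟩
          · rcases eq_or_ne (u+1) β with h2b | h2b
            · rcases eq_or_ne (β+1) α with h3 | h3
              · refine ⟨{α+1}, by rw [Finset.sum_singleton, h1u, ← h3, ← h2b]; ring, ?_⟩
                iterate 15 right
                exact ⟨rfl, h1u, h2b, h3⟩
              · refine ⟨{β+1, α}, by rw [fsum2 _ _ h3, h1u, ← h2b]; ring, ?_⟩
                iterate 14 right
                exact Or.inl ⟨rfl, h1u, h2b, h3⟩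
            · refine ⟨{u+1, α, β}, by rw [fsum3 _ _ _ h2 h2b hαβ, h1u]; ring, ?_⟩
              iterate 11 right
              exact Or.inl ⟨rfl, h1u, h2, h2b⟩
        · exact ⟨{α, β, u, a}, by
            rw [fsum4 _ _ _ _ hαβ hαu (Ne.symm h1) hβu (Ne.symm h1b) (Ne.symm h1u)],
            Or.inl ⟨rfl, h1, h1b, h1u⟩⟩
  have hR : ∃ T : Finset ℕ, (∑ i ∈ T, 2^i = 2^δ + 2^t + 2^1 + 2^ω) ∧
      ((T = {δ, t, 1, ω} ∧ δ ≠ t ∧ δ ≠ 1 ∧ δ ≠ ω)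
      ∨ (T = {t+1, 1, ω} ∧ δ = t)
      ∨ (T = {t, 2, ω} ∧ δ = 1)
      ∨ (T = {t, 2} ∧ δ = ω ∧ ω = 0)) := by
    rcases eq_or_ne δ t with g1 | g1
    · exact ⟨{t+1, 1, ω}, by
        rw [fsum3 _ _ _ (by omega) (by omega) (by omega), g1]; ring,
        Or.inr (Or.inl ⟨rfl, g1⟩)⟩
    · rcases eq_or_ne δ 1 with g2 | g2
      · exact ⟨{t, 2, ω}, by
          rw [fsum3 _ _ _ (by omega) (by omega) (by omega), g2]; ring,
          Or.inr (Or.inr (Or.inl ⟨rfl, g2⟩))⟩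
      · rcases eq_or_ne δ ω with g3 | g3
        · have gω : ω = 0 := by omega
          exact ⟨{t, 2}, by rw [fsum2 _ _ (by omega), g3, gω]; ring,
            Or.inr (Or.inr (Or.inr ⟨rfl, g3, gω⟩))⟩
        · exact ⟨{δ, t, 1, ω}, by
            rw [fsum4 _ _ _ _ g1 g2 g3 (by omega) (by omega) (by omega)],
            Or.inl ⟨rfl, g1, g2, g3⟩⟩
  obtain ⟨S, hSsum, hScase⟩ := hL
  obtain ⟨T, hTsum, hTcase⟩ := hR
  have hST : S = T := two_pow_sum_inj (by rw [hSsum, hTsum]; exact heq)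
  clear hSsum hTsum heq
  rcases hTcase with ⟨rfl,g1,g2,g3⟩|⟨rfl,g1⟩|⟨rfl,g1⟩|⟨rfl,g1,g2⟩
  · -- T = {δ, t, 1, ω}
    rcases hScase with ⟨rfl,h1,h2,h3⟩|⟨rfl,h1,h2,h3⟩|⟨rfl,h1,h2,h3⟩|⟨rfl,h1,h2,h3⟩|
      ⟨rfl,h1,h2,h3⟩|⟨rfl,h1,h2,h3⟩|⟨rfl,h1,h2,h3⟩|⟨rfl,h1,h2,h3⟩|⟨rfl,h1,h2,h3⟩|
      ⟨rfl,h1,h2,h3⟩|⟨rfl,h1,h2,h3⟩|⟨rfl,h1,h2,h3⟩|⟨rfl,h1,h2,h3⟩|⟨rfl,h1,h2,h3⟩|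
      ⟨rfl,h1,h2,h3⟩|⟨rfl,h1,h2,h3⟩ <;>
    (have w1 : δ ∈ ({δ, t, 1, ω} : Finset ℕ) := by simp
     have w2 : t ∈ ({δ, t, 1, ω} : Finset ℕ) := by simp
     have w3 : (1:ℕ) ∈ ({δ, t, 1, ω} : Finset ℕ) := by simp
     have w4 : ω ∈ ({δ, t, 1, ω} : Finset ℕ) := by simp
     rw [← hST] at w1 w2 w3 w4
     simp only [Finset.mem_insert, Finset.mem_singleton] at w1 w2 w3 w4
     omega)
  · -- T = {t+1, 1, ω}
    rcases hScase with ⟨rfl,h1,h2,h3⟩|⟨rfl,h1,h2,h3⟩|⟨rfl,h1,h2,h3⟩|⟨rfl,h1,h2,h3⟩|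
      ⟨rfl,h1,h2,h3⟩|⟨rfl,h1,h2,h3⟩|⟨rfl,h1,h2,h3⟩|⟨rfl,h1,h2,h3⟩|⟨rfl,h1,h2,h3⟩|
      ⟨rfl,h1,h2,h3⟩|⟨rfl,h1,h2,h3⟩|⟨rfl,h1,h2,h3⟩|⟨rfl,h1,h2,h3⟩|⟨rfl,h1,h2,h3⟩|
      ⟨rfl,h1,h2,h3⟩|⟨rfl,h1,h2,h3⟩ <;>
    first
    | (have m1 : (α) ∈ ({α, β, u, a} : Finset ℕ) := by simp
       have m2 : (β) ∈ ({α, β, u, a} : Finset ℕ) := by simp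
       have m3 : (u) ∈ ({α, β, u, a} : Finset ℕ) := by simp
       have m4 : (a) ∈ ({α, β, u, a} : Finset ℕ) := by simp
       rw [hST] at m1 m2 m3 m4
       simp only [Finset.mem_insert, Finset.mem_singleton] at m1 m2 m3 m4
       omega)
    | (have w1 : (t+1) ∈ ({t+1, 1, ω} : Finset ℕ) := by simp
       have w2 : (1) ∈ ({t+1, 1, ω} : Finset ℕ) := by simp
       have w3 : (ω) ∈ ({t+1, 1, ω} : Finset ℕ) := by simp
       rw [← hST] at w1 w2 w3
       simp only [Finset.mem_insert, Finset.mem_singleton] at w1 w2 w3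
       omega)
  · -- T = {t, 2, ω}
    rcases hScase with ⟨rfl,h1,h2,h3⟩|⟨rfl,h1,h2,h3⟩|⟨rfl,h1,h2,h3⟩|⟨rfl,h1,h2,h3⟩|
      ⟨rfl,h1,h2,h3⟩|⟨rfl,h1,h2,h3⟩|⟨rfl,h1,h2,h3⟩|⟨rfl,h1,h2,h3⟩|⟨rfl,h1,h2,h3⟩|
      ⟨rfl,h1,h2,h3⟩|⟨rfl,h1,h2,h3⟩|⟨rfl,h1,h2,h3⟩|⟨rfl,h1,h2,h3⟩|⟨rfl,h1,h2,h3⟩|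
      ⟨rfl,h1,h2,h3⟩|⟨rfl,h1,h2,h3⟩ <;>
    first
    | (have m1 : (α) ∈ ({α, β, u, a} : Finset ℕ) := by simp
       have m2 : (β) ∈ ({α, β, u, a} : Finset ℕ) := by simp
       have m3 : (u) ∈ ({α, β, u, a} : Finset ℕ) := by simp
       have m4 : (a) ∈ ({α, β, u, a} : Finset ℕ) := by simp
       rw [hST] at m1 m2 m3 m4
       simp only [Finset.mem_insert, Finset.mem_singleton] at m1 m2 m3 m4
       omega)
    | (have w1 : (t) ∈ ({t, 2, ω} : Finset ℕ) := by simp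
       have w2 : (2) ∈ ({t, 2, ω} : Finset ℕ) := by simp
       have w3 : (ω) ∈ ({t, 2, ω} : Finset ℕ) := by simp
       rw [← hST] at w1 w2 w3
       simp only [Finset.mem_insert, Finset.mem_singleton] at w1 w2 w3
       omega)
  · -- T = {t, 2}
    rcases hScase with ⟨rfl,h1,h2,h3⟩|⟨rfl,h1,h2,h3⟩|⟨rfl,h1,h2,h3⟩|⟨rfl,h1,h2,h3⟩|
      ⟨rfl,h1,h2,h3⟩|⟨rfl,h1,h2,h3⟩|⟨rfl,h1,h2,h3⟩|⟨rfl,h1,h2,h3⟩|⟨rfl,h1,h2,h3⟩|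
      ⟨rfl,h1,h2,h3⟩|⟨rfl,h1,h2,h3⟩|⟨rfl,h1,h2,h3⟩|⟨rfl,h1,h2,h3⟩|⟨rfl,h1,h2,h3⟩|
      ⟨rfl,h1,h2,h3⟩|⟨rfl,h1,h2,h3⟩ <;>
    first
    | (have m1 : (α) ∈ ({α, β, u, a} : Finset ℕ) := by simp
       have m2 : (β) ∈ ({α, β, u, a} : Finset ℕ) := by simp
       have m3 : (u) ∈ ({α, β, u, a} : Finset ℕ) := by simp
       have m4 : (a) ∈ ({α, β, u, a} : Finset ℕ) := by simp
       rw [hST] at m1 m2 m3 m4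
       simp only [Finset.mem_insert, Finset.mem_singleton] at m1 m2 m3 m4
       omega)
    | (have m1 : (α+1) ∈ ({α+1, β, u} : Finset ℕ) := by simp
       have m2 : (β) ∈ ({α+1, β, u} : Finset ℕ) := by simp
       have m3 : (u) ∈ ({α+1, β, u} : Finset ℕ) := by simp
       rw [hST] at m1 m2 m3
       simp only [Finset.mem_insert, Finset.mem_singleton] at m1 m2 m3
       omega)
    | (have m1 : (β+1) ∈ ({β+1, α, u} : Finset ℕ) := by simp
       have m2 : (α) ∈ ({β+1, α, u} : Finset ℕ) := by simp
       have m3 : (u) ∈ ({β+1, α, u} : Finset ℕ) := by simp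
       rw [hST] at m1 m2 m3
       simp only [Finset.mem_insert, Finset.mem_singleton] at m1 m2 m3
       omega)
    | (have m1 : (u+1) ∈ ({u+1, α, β} : Finset ℕ) := by simp
       have m2 : (α) ∈ ({u+1, α, β} : Finset ℕ) := by simp
       have m3 : (β) ∈ ({u+1, α, β} : Finset ℕ) := by simp
       rw [hST] at m1 m2 m3
       simp only [Finset.mem_insert, Finset.mem_singleton] at m1 m2 m3
       omega)
    | (have w1 : (t) ∈ ({t, 2} : Finset ℕ) := by simp
       have w2 : (2) ∈ ({t, 2} : Finset ℕ) := by simp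
       rw [← hST] at w1 w2
       simp only [Finset.mem_insert, Finset.mem_singleton] at w1 w2
       omega)


theorem stmt_16 (n t : ℕ) (ht : 2 < t) (hn : n = 2 * t + 1) :
    ¬ ∃ a k l : ℕ, a < n ∧ 1 ≤ k ∧ k < n ∧ 1 ≤ l ∧ l < n ∧
      Nat.ModEq (2 ^ n - 1)
        ((∑ j ∈ Finset.range l, 2 ^ (j * k)) * (2 ^ t + 2 + 1)) (2 ^ a) := by
  rintro ⟨a, k, l, ha, hk1, hk, hl1, hl, h⟩
  have hn0 : 0 < n := by omega
  have h2npos : (1:ℕ) ≤ 2^n := Nat.one_le_two_pow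
  set N := 2^n - 1 with hNdef
  have hNsucc : N + 1 = 2^n := by omega
  -- move to ZMod N
  have hz : (((∑ j ∈ Finset.range l, 2^(j*k)) * (2^t+2+1) : ℕ) : ZMod N)
      = ((2^a : ℕ) : ZMod N) := (ZMod.natCast_eq_natCast_iff _ _ _).mpr h
  push_cast at hz
  have hone : (2 : ZMod N)^n = 1 := by
    have h1 : ((2^n : ℕ) : ZMod N) = ((N + 1 : ℕ) : ZMod N) := by rw [hNsucc]
    push_cast at h1
    rwa [ZMod.natCast_self, zero_add] at h1
  have hred : ∀ m : ℕ, (2 : ZMod N)^m = 2^(m % n) := by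
    intro m
    conv_lhs => rw [← Nat.div_add_mod m n]
    rw [pow_add, pow_mul, hone, one_pow, one_mul]
  have hsum : (∑ j ∈ Finset.range l, (2:ZMod N)^(j*k))
      = ∑ j ∈ Finset.range l, ((2:ZMod N)^k)^j :=
    Finset.sum_congr rfl (fun j _ => by rw [← pow_mul, Nat.mul_comm])
  have hg : (∑ j ∈ Finset.range l, (2:ZMod N)^(j*k)) * ((2:ZMod N)^k - 1)
      = 2^(l*k) - 1 := by
    rw [hsum, geom_sum_mul, ← pow_mul, Nat.mul_comm k l]
  have heqz : ((2:ZMod N)^(l*k) - 1) * (2^t+2+1) = 2^a * (2^k - 1) := by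
    linear_combination ((2:ZMod N)^k - 1) * hz - (2^t+2+1 : ZMod N) * hg
  have hfz : (2:ZMod N)^((l*k+t)%n) + 2^((l*k+1)%n) + 2^((l*k)%n) + 2^a
      = 2^((a+k)%n) + 2^t + 2 + 1 := by
    rw [← hred (l*k+t), ← hred (l*k+1), ← hred (l*k), ← hred (a+k)]
    linear_combination heqz
  have hmod : (2^((l*k+t)%n) + 2^((l*k+1)%n) + 2^((l*k)%n) + 2^a)
      ≡ (2^((a+k)%n) + 2^t + 2 + 1) [MOD N] := by
    rw [← ZMod.natCast_eq_natCast_iff]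
    push_cast
    exact hfz
  -- characterizations
  have hamod : (l*k+t)%n < n := Nat.mod_lt _ hn0
  have hbmod : (l*k+1)%n < n := Nat.mod_lt _ hn0
  have humod : (l*k)%n < n := Nat.mod_lt _ hn0
  have hdmod : (a+k)%n < n := Nat.mod_lt _ hn0
  have hαchar : (l*k+t)%n < n ∧
      ((l*k+t)%n = (l*k)%n + t ∨ (l*k+t)%n + n = (l*k)%n + t) := by
    have e1 : (l*k+t)%n = ((l*k)%n + t)%n := by
      rw [Nat.add_mod, Nat.mod_eq_of_lt (show t < n by omega)]
    rw [e1]; exact modchar _ n hn0 (by omega)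
  have hβchar : (l*k+1)%n < n ∧
      ((l*k+1)%n = (l*k)%n + 1 ∨ (l*k+1)%n + n = (l*k)%n + 1) := by
    have e1 : (l*k+1)%n = ((l*k)%n + 1)%n := by
      rw [Nat.add_mod, Nat.mod_eq_of_lt (show 1 < n by omega)]
    rw [e1]; exact modchar _ n hn0 (by omega)
  have hδa : (a+k)%n ≠ a := by
    have := modchar (a+k) n hn0 (by omega)
    omega
  -- bounds
  set B := 2^(2*t-1) with hBdef
  have hB : 32 ≤ B := by
    rw [show (32:ℕ) = 2^5 by norm_num, hBdef]
    exact Nat.pow_le_pow_right (by norm_num) (by omega)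
  have h2t : (2:ℕ)^(2*t) = 2*B := by
    rw [hBdef, ← pow_succ', show 2*t-1+1 = 2*t from by omega]
  have h2n4B : (2:ℕ)^n = 4*B := by
    rw [hn, pow_succ, h2t]; ring
  have hple : ∀ e, e ≤ 2*t → (2:ℕ)^e ≤ 2*B := fun e he => by
    rw [← h2t]; exact Nat.pow_le_pow_right (by norm_num) he
  have hb1 : 2^((l*k+t)%n) ≤ 2*B := hple _ (by omega)
  have hb2 : 2^((l*k+1)%n) ≤ 2*B := hple _ (by omega)
  have hb3 : 2^((l*k)%n) ≤ 2*B := hple _ (by omega)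
  have hb4 : 2^a ≤ 2*B := hple _ (by omega)
  have hbq : 2^((a+k)%n) ≤ 2*B := hple _ (by omega)
  have hbt : (2:ℕ)^t ≤ B := by
    rw [hBdef]; exact Nat.pow_le_pow_right (by norm_num) (by omega)
  have hp1 : 1 ≤ (2:ℕ)^((l*k+t)%n) := Nat.one_le_two_pow
  have hp2 : 1 ≤ (2:ℕ)^((l*k+1)%n) := Nat.one_le_two_pow
  have hp3 : 1 ≤ (2:ℕ)^((l*k)%n) := Nat.one_le_two_pow
  have hp4 : 1 ≤ (2:ℕ)^a := Nat.one_le_two_pow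
  have hpq : 1 ≤ (2:ℕ)^((a+k)%n) := Nat.one_le_two_pow
  obtain ⟨c, hc⟩ := (Nat.modEq_iff_dvd).mp hmod
  push_cast at hc
  -- integer bounds
  have zb1 : ((2:ℤ))^((l*k+t)%n) ≤ 2*(B:ℤ) := by exact_mod_cast hb1
  have zb2 : ((2:ℤ))^((l*k+1)%n) ≤ 2*(B:ℤ) := by exact_mod_cast hb2
  have zb3 : ((2:ℤ))^((l*k)%n) ≤ 2*(B:ℤ) := by exact_mod_cast hb3
  have zb4 : ((2:ℤ))^a ≤ 2*(B:ℤ) := by exact_mod_cast hb4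
  have zbq : ((2:ℤ))^((a+k)%n) ≤ 2*(B:ℤ) := by exact_mod_cast hbq
  have zbt : ((2:ℤ))^t ≤ (B:ℤ) := by exact_mod_cast hbt
  have zp1 : (1:ℤ) ≤ (2:ℤ)^((l*k+t)%n) := by exact_mod_cast hp1
  have zp2 : (1:ℤ) ≤ (2:ℤ)^((l*k+1)%n) := by exact_mod_cast hp2
  have zp3 : (1:ℤ) ≤ (2:ℤ)^((l*k)%n) := by exact_mod_cast hp3
  have zp4 : (1:ℤ) ≤ (2:ℤ)^a := by exact_mod_cast hp4
  have zpq : (1:ℤ) ≤ (2:ℤ)^((a+k)%n) := by exact_mod_cast hpq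
  have zpt : (1:ℤ) ≤ (2:ℤ)^t := by exact_mod_cast (Nat.one_le_two_pow (n := t))
  have zNB : (N:ℤ) = 4*(B:ℤ) - 1 := by
    have h1 : (N:ℕ) + 1 = 4*B := by omega
    have h2 : ((N:ℕ):ℤ) + 1 = 4*(B:ℤ) := by exact_mod_cast h1
    linarith
  have hBz : (32:ℤ) ≤ (B:ℤ) := by exact_mod_cast hB
  have hcle : c ≤ 1 := by
    by_contra hh
    push_neg at hh
    have h2c : (2:ℤ) ≤ c := hh
    have hmul : (N:ℤ)*2 ≤ N*c :=
      mul_le_mul_of_nonneg_left h2c (by positivity)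
    rw [← hc] at hmul
    linarith
  have hcge : -1 ≤ c := by
    by_contra hh
    push_neg at hh
    have h2c : c ≤ -2 := by omega
    have hmul : (N:ℤ)*c ≤ N*(-2) :=
      mul_le_mul_of_nonneg_left h2c (by positivity)
    rw [← hc] at hmul
    linarith
  have hctri : c = -1 ∨ c = 0 ∨ c = 1 := by omega
  rcases hctri with rfl | rfl | rfl
  · -- L = R + N : use ω = n
    have hz1 : ((2^((l*k+t)%n) + 2^((l*k+1)%n) + 2^((l*k)%n) + 2^a : ℕ) : ℤ)
        = ((2^((a+k)%n) + 2^t + 2 + 1 + N : ℕ) : ℤ) := by push_cast; linarith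
    have hn1 : (2^((l*k+t)%n) + 2^((l*k+1)%n) + 2^((l*k)%n) + 2^a : ℕ)
        = 2^((a+k)%n) + 2^t + 2 + 1 + N := by exact_mod_cast hz1
    have hfin : (2^((l*k+t)%n) + 2^((l*k+1)%n) + 2^((l*k)%n) + 2^a : ℕ)
        = 2^((a+k)%n) + 2^t + 2^1 + 2^n := by
      have e1 : (2:ℕ)^1 = 2 := by norm_num
      omega
    exact KEY n t ((l*k)%n) a ((a+k)%n) n ((l*k+t)%n) ((l*k+1)%n) ht hn ha hdmod
      humod hδa (Or.inr rfl) hαchar hβchar hfin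
  · -- L = R : use ω = 0
    have hz1 : ((2^((l*k+t)%n) + 2^((l*k+1)%n) + 2^((l*k)%n) + 2^a : ℕ) : ℤ)
        = ((2^((a+k)%n) + 2^t + 2 + 1 : ℕ) : ℤ) := by push_cast; linarith
    have hn1 : (2^((l*k+t)%n) + 2^((l*k+1)%n) + 2^((l*k)%n) + 2^a : ℕ)
        = 2^((a+k)%n) + 2^t + 2 + 1 := by exact_mod_cast hz1
    have hfin : (2^((l*k+t)%n) + 2^((l*k+1)%n) + 2^((l*k)%n) + 2^a : ℕ)
        = 2^((a+k)%n) + 2^t + 2^1 + 2^0 := by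
      have e1 : (2:ℕ)^1 = 2 := by norm_num
      have e2 : (2:ℕ)^0 = 1 := by norm_num
      omega
    exact KEY n t ((l*k)%n) a ((a+k)%n) 0 ((l*k+t)%n) ((l*k+1)%n) ht hn ha hdmod
      humod hδa (Or.inl rfl) hαchar hβchar hfin
  · -- R = L + N : impossible by size
    have hz1 : ((2^((a+k)%n) + 2^t + 2 + 1 : ℕ) : ℤ)
        = ((2^((l*k+t)%n) + 2^((l*k+1)%n) + 2^((l*k)%n) + 2^a + N : ℕ) : ℤ) := by
      push_cast; linarith
    have hn1 : (2^((a+k)%n) + 2^t + 2 + 1 : ℕ)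
        = 2^((l*k+t)%n) + 2^((l*k+1)%n) + 2^((l*k)%n) + 2^a + N := by
      exact_mod_cast hz1
    omega
end

section
/- Let n = 2t + 1 with t > 2 even, and let i be a natural number with gcd(i, n) = 1. Then the even Niho exponent N = 2^t + 2^{t/2} - 1 is never in the cyclotomic coset of e((t+2)/2, i) modulo 2^n - 1; that is, there is no natural number a with 2^a · (2^t + 2^{t/2} - 1) ≡ ∑_{j=0}^{t/2} 2^{ji} (mod 2^n - 1). -/
open Finset

/-- geometric sum of powers of 2 -/
lemma aux_geom (s : ℕ) : ∑ j ∈ range s, 2 ^ j = 2 ^ s - 1 := by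
  induction s with
  | zero => simp
  | succ k ih =>
    rw [Finset.sum_range_succ, ih, pow_succ]
    have : 1 ≤ 2 ^ k := Nat.one_le_two_pow
    omega

/-- powers of two mod 2^n - 1 reduce exponents mod n -/
lemma aux_pow_mod (n k : ℕ) (hn : 0 < n) : (2:ℕ) ^ k ≡ 2 ^ (k % n) [MOD 2 ^ n - 1] := by
  conv_lhs => rw [← Nat.div_add_mod k n]
  rw [pow_add, pow_mul]
  have h1 : (2:ℕ) ^ n ≡ 1 [MOD 2 ^ n - 1] :=
    ((Nat.modEq_iff_dvd' Nat.one_le_two_pow).mpr dvd_rfl).symm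
  calc ((2:ℕ) ^ n) ^ (k / n) * 2 ^ (k % n)
      ≡ 1 ^ (k / n) * 2 ^ (k % n) [MOD 2 ^ n - 1] := ((h1.pow _).mul_right _)
    _ = 2 ^ (k % n) := by rw [one_pow, one_mul]

lemma aux_sum_modEq {α : Type*} (S : Finset α) (m : ℕ) (f g : α → ℕ)
    (h : ∀ x ∈ S, f x ≡ g x [MOD m]) : ∑ x ∈ S, f x ≡ ∑ x ∈ S, g x [MOD m] := by
  induction S using Finset.cons_induction with
  | empty => rfl
  | cons a S ha ih =>
    rw [Finset.sum_cons, Finset.sum_cons]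
    exact (h a (Finset.mem_cons_self a S)).add (ih fun x hx => h x (Finset.mem_cons.mpr (Or.inr hx)))

/-- a subset of range n with fewer than n elements has 2-power sum < 2^n - 1 -/
lemma aux_sum_lt (n : ℕ) (T : Finset ℕ) (hT : T ⊆ range n) (hc : T.card < n) :
    ∑ x ∈ T, 2 ^ x < 2 ^ n - 1 := by
  have : ∃ m ∈ range n, m ∉ T := by
    by_contra h
    push_neg at h
    have : range n ⊆ T := fun x hx => h x hx
    have := Finset.card_le_card this
    simp at this; omega
  obtain ⟨m, hm, hmT⟩ := this
  have hsub : T ⊆ (range n).erase m := fun x hx =>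
    Finset.mem_erase.mpr ⟨fun h => hmT (h ▸ hx), hT hx⟩
  have h1 : ∑ x ∈ T, 2 ^ x ≤ ∑ x ∈ (range n).erase m, 2 ^ x :=
    Finset.sum_le_sum_of_subset hsub
  have h2 : 2 ^ m + ∑ x ∈ (range n).erase m, 2 ^ x = ∑ x ∈ range n, 2 ^ x :=
    Finset.add_sum_erase _ _ hm
  rw [aux_geom] at h2
  have hm1 : 1 ≤ (2:ℕ) ^ m := Nat.one_le_two_pow
  omega

theorem stmt_19 (n t i : ℕ) (ht : 2 < t) (hte : Even t) (hn : n = 2 * t + 1)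
    (hgcd : Nat.gcd i n = 1) :
    ¬ ∃ a : ℕ, Nat.ModEq (2 ^ n - 1)
        (2 ^ a * (2 ^ t + 2 ^ (t / 2) - 1))
        (∑ j ∈ Finset.range (t / 2 + 1), 2 ^ (j * i)) := by
  rintro ⟨a, hmod⟩
  obtain ⟨s, hs⟩ := hte
  have hts : t / 2 = s := by omega
  have hts2 : t = 2 * s := by omega
  have hs2 : 2 ≤ s := by omega
  have hn4 : n = 4 * s + 1 := by omega
  have hn0 : 0 < n := by omega
  rw [hts, hts2] at hmod
  -- the bit-set of the Niho exponent
  set S0 : Finset ℕ := insert (2 * s) (range s) with hS0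
  have hmemS0 : ∀ v, v ∈ S0 ↔ v = 2 * s ∨ v < s := by
    intro v; simp [hS0, Finset.mem_insert, Finset.mem_range]
  have hcardS0 : S0.card = s + 1 := by
    rw [hS0, Finset.card_insert_of_notMem (by simp [Finset.mem_range]; omega), Finset.card_range]
  -- decomposition of the Niho exponent
  have hNdecomp : 2 ^ (2 * s) + 2 ^ s - 1 = ∑ x ∈ S0, 2 ^ x := by
    rw [hS0, Finset.sum_insert (by simp [Finset.mem_range]; omega), aux_geom,
      Nat.add_sub_assoc Nat.one_le_two_pow]
  set f : ℕ → ℕ := fun x => (x + a) % n with hf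
  set g : ℕ → ℕ := fun j => (j * i) % n with hg
  set F1 : Finset ℕ := S0.image f with hF1
  set F2 : Finset ℕ := (range (s + 1)).image g with hF2
  -- injectivity
  have hinjf : ∀ x ∈ S0, ∀ y ∈ S0, f x = f y → x = y := by
    intro x hx y hy hxy
    have hx' : x < n := by rw [hmemS0] at hx; omega
    have hy' : y < n := by rw [hmemS0] at hy; omega
    have h1 : x + a ≡ y + a [MOD n] := hxy
    have h2 : x ≡ y [MOD n] := h1.add_right_cancel' a
    have := Nat.ModEq.eq_of_lt_of_lt h2 hx' hy'
    exact this
  have hinjg : ∀ x ∈ range (s + 1), ∀ y ∈ range (s + 1), g x = g y → x = y := by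
    intro x hx y hy hxy
    simp [Finset.mem_range] at hx hy
    have h1 : x * i ≡ y * i [MOD n] := hxy
    have h2 : x ≡ y [MOD n] :=
      Nat.ModEq.cancel_right_of_coprime (by rwa [Nat.gcd_comm] at hgcd) h1
    exact Nat.ModEq.eq_of_lt_of_lt h2 (by omega) (by omega)
  -- reduce both sides mod 2^n - 1 to sums over F1, F2
  have hv1 : 2 ^ a * (2 ^ (2 * s) + 2 ^ s - 1) ≡ ∑ x ∈ S0, 2 ^ f x [MOD 2 ^ n - 1] := by
    rw [hNdecomp, Finset.mul_sum]
    have : ∀ x ∈ S0, 2 ^ a * 2 ^ x ≡ 2 ^ f x [MOD 2 ^ n - 1] := by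
      intro x _
      rw [← pow_add]
      have := aux_pow_mod n (a + x) hn0
      simpa [hf, Nat.add_comm] using this
    exact aux_sum_modEq _ _ _ _ this
  have hv2 : (∑ j ∈ range (s + 1), 2 ^ (j * i)) ≡ ∑ j ∈ range (s + 1), 2 ^ g j [MOD 2 ^ n - 1] :=
    aux_sum_modEq _ _ _ _ (fun j _ => aux_pow_mod n (j * i) hn0)
  have hkey : (∑ x ∈ S0, 2 ^ f x) ≡ ∑ j ∈ range (s + 1), 2 ^ g j [MOD 2 ^ n - 1] :=
    (hv1.symm.trans hmod).trans hv2
  -- rewrite via images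
  have hsum1 : ∑ x ∈ F1, 2 ^ x = ∑ x ∈ S0, 2 ^ f x := Finset.sum_image hinjf
  have hsum2 : ∑ x ∈ F2, 2 ^ x = ∑ j ∈ range (s + 1), 2 ^ g j := Finset.sum_image hinjg
  have hF1sub : F1 ⊆ range n := by
    intro x hx
    simp only [hF1, Finset.mem_image] at hx
    obtain ⟨u, _, rfl⟩ := hx
    simp [hf, Finset.mem_range, Nat.mod_lt _ hn0]
  have hF2sub : F2 ⊆ range n := by
    intro x hx
    simp only [hF2, Finset.mem_image] at hx
    obtain ⟨u, _, rfl⟩ := hx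
    simp [hg, Finset.mem_range, Nat.mod_lt _ hn0]
  have hcard1 : F1.card = s + 1 := by
    rw [hF1, Finset.card_image_of_injOn hinjf, hcardS0]
  have hcard2 : F2.card = s + 1 := by
    rw [hF2, Finset.card_image_of_injOn hinjg, Finset.card_range]
  have hlt1 : ∑ x ∈ F1, 2 ^ x < 2 ^ n - 1 := aux_sum_lt n F1 hF1sub (by omega)
  have hlt2 : ∑ x ∈ F2, 2 ^ x < 2 ^ n - 1 := aux_sum_lt n F2 hF2sub (by omega)
  have heqsum : ∑ x ∈ F1, 2 ^ x = ∑ x ∈ F2, 2 ^ x := by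
    have h : (∑ x ∈ F1, 2 ^ x) ≡ ∑ x ∈ F2, 2 ^ x [MOD 2 ^ n - 1] := by
      rw [hsum1, hsum2]; exact hkey
    exact Nat.ModEq.eq_of_lt_of_lt h hlt1 hlt2
  have hFeq : F1 = F2 := Finset.geomSum_injective (le_refl 2) heqsum
  -- the counting predicate
  classical
  set Q : ℕ → Prop := fun x => (x + i) % n ∈ F1 with hQ
  -- membership characterization for Q ∘ f
  have hQf : ∀ u ∈ S0, (Q (f u) ↔ (u + i) % n ∈ S0) := by
    intro u hu
    constructor
    · intro hq
      simp only [hQ, hF1, Finset.mem_image, hf] at hq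
      obtain ⟨v, hv, hveq⟩ := hq
      have hv' : v < n := by rw [hmemS0] at hv; omega
      have h1 : ((u + a) % n + i) % n = (u + a + i) % n := Nat.mod_add_mod (u + a) n i
      have h2 : v + a ≡ u + a + i [MOD n] := by
        show (v + a) % n = (u + a + i) % n
        exact hveq.trans h1
      have h3 : v ≡ u + i [MOD n] := by
        have : v + a ≡ (u + i) + a [MOD n] := by
          calc v + a ≡ u + a + i [MOD n] := h2
            _ = (u + i) + a := by ring
        exact this.add_right_cancel' a
      have : (u + i) % n = v := by
        rw [← h3]; exact Nat.mod_eq_of_lt hv'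
      rw [this]; exact hv
    · intro hm
      simp only [hQ, hF1, Finset.mem_image, hf]
      refine ⟨(u + i) % n, hm, ?_⟩
      have h1 : ((u + a) % n + i) % n = (u + a + i) % n := Nat.mod_add_mod (u + a) n i
      have h2 : ((u + i) % n + a) % n = (u + i + a) % n := Nat.mod_add_mod (u + i) n a
      show ((u + i) % n + a) % n = ((u + a) % n + i) % n
      rw [h2, h1]
      congr 1
      ring
  -- lower bound: F1.filter Q has at least s elements
  have hQg : ∀ j, j < s → Q (g j) := by
    intro j hj
    have h1 : (g j + i) % n = g (j + 1) := by
      simp only [hg]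
      rw [Nat.mod_add_mod]
      congr 1; ring
    simp only [hQ, h1, hFeq, hF2]
    exact Finset.mem_image.mpr ⟨j + 1, Finset.mem_range.mpr (by omega), rfl⟩
  have hlow : s ≤ (F1.filter Q).card := by
    have hsub : (range s).image g ⊆ F1.filter Q := by
      intro x hx
      simp only [Finset.mem_image, Finset.mem_range] at hx
      obtain ⟨j, hj, rfl⟩ := hx
      refine Finset.mem_filter.mpr ⟨?_, hQg j hj⟩
      rw [hFeq, hF2]
      exact Finset.mem_image.mpr ⟨j, Finset.mem_range.mpr (by omega), rfl⟩
    have hcardim : ((range s).image g).card = s := by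
      rw [Finset.card_image_of_injOn, Finset.card_range]
      intro x hx y hy hxy
      exact hinjg x (Finset.mem_range.mpr (by simp [Finset.mem_range] at hx; omega))
        y (Finset.mem_range.mpr (by simp [Finset.mem_range] at hy; omega)) hxy
    calc s = ((range s).image g).card := hcardim.symm
      _ ≤ (F1.filter Q).card := Finset.card_le_card hsub
  -- upper bound: F1.filter Q has at most s - 1 elements
  set d : ℕ := i % n with hd
  have hid : ∀ u, (u + d) % n = (u + i) % n := by
    intro u; rw [hd]; exact Nat.add_mod_mod u i n
  have hd0 : 1 ≤ d := by
    rcases Nat.eq_zero_or_pos d with h | h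
    · exfalso
      have hdvd : n ∣ i := Nat.dvd_of_mod_eq_zero (hd ▸ h)
      have : n ∣ Nat.gcd i n := Nat.dvd_gcd hdvd dvd_rfl
      rw [hgcd] at this
      have := Nat.le_of_dvd one_pos this
      omega
    · exact h
  have hdn : d < n := hd ▸ Nat.mod_lt _ hn0
  have hexist : ∃ u1 ∈ S0, ∃ u2 ∈ S0, u1 ≠ u2 ∧
      (u1 + d) % n ∉ S0 ∧ (u2 + d) % n ∉ S0 := by
    by_cases h1 : d ≤ s
    · refine ⟨s - 1, ?_, 2 * s, ?_, ?_, ?_, ?_⟩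
      · rw [hmemS0]; omega
      · rw [hmemS0]; omega
      · omega
      · rw [Nat.mod_eq_of_lt (by omega), hmemS0]; omega
      · rw [Nat.mod_eq_of_lt (by omega), hmemS0]; omega
    · by_cases h2 : d ≤ 2 * s
      · by_cases h3 : d = 2 * s
        · refine ⟨1, ?_, 2 * s, ?_, ?_, ?_, ?_⟩
          · rw [hmemS0]; omega
          · rw [hmemS0]; omega
          · omega
          · rw [Nat.mod_eq_of_lt (by omega), hmemS0]; omega
          · rw [Nat.mod_eq_of_lt (by omega), hmemS0]; omega
        · refine ⟨0, ?_, 2 * s, ?_, ?_, ?_, ?_⟩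
          · rw [hmemS0]; omega
          · rw [hmemS0]; omega
          · omega
          · rw [Nat.mod_eq_of_lt (by omega), hmemS0]; omega
          · rw [Nat.mod_eq_of_lt (by omega), hmemS0]; omega
      · by_cases h4 : d ≤ 3 * s
        · refine ⟨0, ?_, 1, ?_, ?_, ?_, ?_⟩
          · rw [hmemS0]; omega
          · rw [hmemS0]; omega
          · omega
          · rw [Nat.mod_eq_of_lt (by omega), hmemS0]; omega
          · rw [Nat.mod_eq_of_lt (by omega), hmemS0]; omega
        · refine ⟨0, ?_, 2 * s, ?_, ?_, ?_, ?_⟩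
          · rw [hmemS0]; omega
          · rw [hmemS0]; omega
          · omega
          · rw [Nat.mod_eq_of_lt (by omega), hmemS0]; omega
          · rw [Nat.mod_eq_sub_mod (by omega), Nat.mod_eq_of_lt (by omega), hmemS0]
            omega
  obtain ⟨u1, hu1, u2, hu2, hne, hq1, hq2⟩ := hexist
  have hup : (F1.filter Q).card ≤ s - 1 := by
    have himg : F1.filter Q = (S0.filter fun u => Q (f u)).image f := by
      simp only [hF1, Finset.filter_image]
    rw [himg]
    rw [Finset.card_image_of_injOn (fun x hx y hy hxy =>
      hinjf x (Finset.mem_of_mem_filter x hx) y (Finset.mem_of_mem_filter y hy) hxy)]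
    have hsub : (S0.filter fun u => Q (f u)) ⊆ S0 \ {u1, u2} := by
      intro u hu
      rw [Finset.mem_filter] at hu
      rw [Finset.mem_sdiff]
      refine ⟨hu.1, fun hm => ?_⟩
      have hmem : (u + i) % n ∈ S0 := (hQf u hu.1).mp hu.2
      rw [← hid] at hmem
      simp only [Finset.mem_insert, Finset.mem_singleton] at hm
      rcases hm with rfl | rfl
      · exact hq1 hmem
      · exact hq2 hmem
    have hcardle := Finset.card_le_card hsub
    have hss : ({u1, u2} : Finset ℕ) ⊆ S0 := by
      intro x hx
      simp only [Finset.mem_insert, Finset.mem_singleton] at hx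
      rcases hx with rfl | rfl
      exacts [hu1, hu2]
    rw [Finset.card_sdiff_of_subset hss, hcardS0] at hcardle
    have hc2 : ({u1, u2} : Finset ℕ).card = 2 := by
      rw [Finset.card_insert_of_notMem (by simpa using hne), Finset.card_singleton]
    rw [hc2] at hcardle
    omega
  omega
end
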